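/- arXiv:2504.16965 — 5 statements merged into one kernel-verified Lean document; each statement's English description precedes it below -/
import Mathlib

section
/- For every real number x with 0 < |x| < 2π, the series Σ_{k=1}^∞ ζ(1−2k)·x^{2k}/(2k)! converges and ln((e^x − 1)/x) = x/2 − Σ_{k=1}^∞ ζ(1−2k)·x^{2k}/(2k)!. -/
/-- The Dirichlet eta function, `η(s) = (1 - 2^(1-s)) ζ(s)` (the entire analytic
continuation of `Σ (-1)^(n-1)/n^s`). -/
noncomputable def dirichletEta (s : ℂ) : ℂ := (1 - 2 ^ ((1 : ℂ) - s)) * riemannZeta s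

/-- Stirling numbers of the second kind `S(n,k)`. -/
def stirlingS2 : ℕ → ℕ → ℕ
  | 0, 0 => 1
  | 0, _ + 1 => 0
  | _ + 1, 0 => 0
  | n + 1, k + 1 => (k + 1) * stirlingS2 n (k + 1) + stirlingS2 n k

/-- Signed Stirling numbers of the first kind `s(n,k)`, defined by
`x(x-1)⋯(x-n+1) = Σ_{k=0}^n s(n,k) x^k`. -/
def stirlingS1 : ℕ → ℕ → ℤ
  | 0, 0 => 1
  | 0, _ + 1 => 0
  | n + 1, 0 => -(n : ℤ) * stirlingS1 n 0
  | n + 1, k + 1 => stirlingS1 n k - (n : ℤ) * stirlingS1 n (k + 1)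

/-- Rising factorial (Pochhammer symbol) `(r)_k = r(r+1)⋯(r+k-1)`. -/
noncomputable def risingFactorial (r : ℝ) : ℕ → ℝ
  | 0 => 1
  | k + 1 => risingFactorial r k * (r + k)

/-- The odd double factorial `(2k-3)!!`, with conventions `(-3)!! = -1`, `(-1)!! = 1`. -/
def oddDoubleFactorial : ℕ → ℤ
  | 0 => -1
  | k + 1 => oddDoubleFactorial k * (2 * (k : ℤ) - 1)


open Real Filter Finset Topology Nat

lemma sinh_euler_prod (y : ℝ) (hy : y ≠ 0) :
    Tendsto (fun n : ℕ => ∏ j ∈ Finset.range n, (1 + (y / π) ^ 2 / ((j : ℝ) + 1) ^ 2))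
      atTop (𝓝 (Real.sinh y / y)) := by
  have hπ : (π : ℝ) ≠ 0 := Real.pi_ne_zero
  have h := (Complex.tendsto_euler_sin_prod (((y / π : ℝ) : ℂ) * Complex.I)).div_const
      ((y : ℂ) * Complex.I)
  have hyI : ((y : ℂ) * Complex.I) ≠ 0 := by
    simp [Complex.ext_iff, hy]
  have h1 : (↑π * (((y / π : ℝ) : ℂ) * Complex.I)) = (y : ℂ) * Complex.I := by
    have hπc : (π : ℂ) ≠ 0 := Complex.ofReal_ne_zero.mpr hπ
    push_cast
    field_simp
  have hkey : ∀ n : ℕ,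
      (↑π * (((y / π : ℝ) : ℂ) * Complex.I) *
        ∏ j ∈ Finset.range n, (1 - (((y / π : ℝ) : ℂ) * Complex.I) ^ 2 / ((j : ℂ) + 1) ^ 2)) /
        ((y : ℂ) * Complex.I) =
      ((∏ j ∈ Finset.range n, (1 + (y / π) ^ 2 / ((j : ℝ) + 1) ^ 2) : ℝ) : ℂ) := by
    intro n
    rw [h1, mul_comm, mul_div_assoc, div_self hyI, mul_one]
    push_cast
    refine Finset.prod_congr rfl fun j _ => ?_
    have : ((((y : ℂ) / ↑π)) * Complex.I) ^ 2 = -(((y : ℂ) / ↑π) ^ 2) := by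
      rw [mul_pow, Complex.I_sq]; ring
    rw [this]
    ring
  have hlim : Complex.sin (↑π * (((y / π : ℝ) : ℂ) * Complex.I)) / ((y : ℂ) * Complex.I) =
      ((Real.sinh y / y : ℝ) : ℂ) := by
    rw [h1, Complex.sin_mul_I, mul_comm ((y : ℂ)) Complex.I, mul_comm _ Complex.I,
      mul_div_mul_left _ _ Complex.I_ne_zero]
    push_cast [Complex.ofReal_sinh]
    rfl
  rw [show (fun n : ℕ => (↑π * (((y / π : ℝ) : ℂ) * Complex.I) *
        ∏ j ∈ Finset.range n, (1 - (((y / π : ℝ) : ℂ) * Complex.I) ^ 2 / ((j : ℂ) + 1) ^ 2)) /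
        ((y : ℂ) * Complex.I)) = fun n : ℕ =>
      ((∏ j ∈ Finset.range n, (1 + (y / π) ^ 2 / ((j : ℝ) + 1) ^ 2) : ℝ) : ℂ)
      from funext hkey, hlim] at h
  exact Filter.tendsto_ofReal_iff.mp h

lemma sinh_div_pos (y : ℝ) (h0 : y ≠ 0) : 0 < Real.sinh y / y := by
  rcases h0.lt_or_gt with h | h
  · have h2 : Real.sinh y < 0 := by
      have := Real.sinh_lt_sinh.mpr h
      rwa [Real.sinh_zero] at this
    exact div_pos_of_neg_of_neg h2 h
  · have h2 : 0 < Real.sinh y := by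
      have := Real.sinh_lt_sinh.mpr h
      rwa [Real.sinh_zero] at this
    exact div_pos h2 h

lemma log_sinh_hasSum (y : ℝ) (h0 : y ≠ 0) :
    HasSum (fun j : ℕ => Real.log (1 + (y / π) ^ 2 / ((j : ℝ) + 1) ^ 2))
      (Real.log (Real.sinh y / y)) := by
  have hπ : 0 < π := Real.pi_pos
  have hyπ : y / π ≠ 0 := div_ne_zero h0 hπ.ne'
  have hqpos : ∀ j : ℕ, 0 < (y / π) ^ 2 / ((j : ℝ) + 1) ^ 2 := by
    intro j
    have h2 : 0 < (y / π) ^ 2 := lt_of_le_of_ne (sq_nonneg _) (Ne.symm (pow_ne_zero 2 hyπ))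
    have h3 : 0 < ((j : ℝ) + 1) ^ 2 := by positivity
    exact div_pos h2 h3
  have hpos := sinh_div_pos y h0
  rw [hasSum_iff_tendsto_nat_of_nonneg
    (fun j => Real.log_nonneg (by linarith [(hqpos j).le]))]
  have ht := (Real.continuousAt_log hpos.ne').tendsto.comp (sinh_euler_prod y h0)
  refine ht.congr fun n => ?_
  simp only [Function.comp_apply]
  exact Real.log_prod fun j _ => by positivity


lemma double_sum (y : ℝ) (h0 : y ≠ 0) (h1 : |y| < π) :
    HasSum (fun n : ℕ =>
      (-1 : ℝ) ^ n * ((y / π) ^ 2) ^ (n + 1) / ((n : ℝ) + 1) *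
        ((-1 : ℝ) ^ (n + 1 + 1) * (2 : ℝ) ^ (2 * (n + 1) - 1) * π ^ (2 * (n + 1)) *
          (bernoulli (2 * (n + 1)) : ℝ) / (2 * (n + 1))!))
      (Real.log (Real.sinh y / y)) := by
  have hπ : 0 < π := Real.pi_pos
  set r : ℝ := (y / π) ^ 2 with hrdef
  have hyπ : y / π ≠ 0 := div_ne_zero h0 hπ.ne'
  have hr0 : 0 < r := lt_of_le_of_ne (sq_nonneg _) (Ne.symm (pow_ne_zero 2 hyπ))
  have hr1 : r < 1 := by
    have h2 : |y / π| < 1 := by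
      rw [abs_div, abs_of_pos hπ]
      exact (div_lt_one hπ).mpr h1
    calc r = |y / π| ^ 2 := by rw [sq_abs]
    _ < 1 := pow_lt_one₀ (abs_nonneg _) h2 two_ne_zero
  set q : ℕ → ℝ := fun j => r / ((j : ℝ) + 1) ^ 2 with hqdef
  have hq0 : ∀ j, 0 < q j := fun j => div_pos hr0 (by positivity)
  have hqr : ∀ j, q j ≤ r := by
    intro j
    apply div_le_self hr0.le
    nlinarith [Nat.cast_nonneg (α := ℝ) j]
  have hq1 : ∀ j, q j < 1 := fun j => lt_of_le_of_lt (hqr j) hr1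
  have hF : ∀ j : ℕ, HasSum (fun n : ℕ => -((-q j) ^ (n + 1) / ((n : ℝ) + 1)))
      (Real.log (1 + q j)) := by
    intro j
    have h := (hasSum_pow_div_log_of_abs_lt_one (x := -q j)
      (by rw [abs_neg, abs_of_pos (hq0 j)]; exact hq1 j)).neg
    simpa [sub_neg_eq_add] using h
  have hbase : Summable (fun j : ℕ => 1 / ((j : ℝ) + 1) ^ 2) := by
    have := (summable_nat_add_iff (f := fun n : ℕ => 1 / (n : ℝ) ^ 2) 1).mpr
      (Real.summable_one_div_nat_pow.mpr one_lt_two)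
    simpa using this
  have hqsum : Summable q := by
    have := hbase.mul_left r
    simpa [hqdef, div_eq_mul_inv] using this
  have hFsummable : Summable (fun p : ℕ × ℕ => -((-q p.1) ^ (p.2 + 1) / ((p.2 : ℝ) + 1))) := by
    apply Summable.of_norm_bounded (g := fun p : ℕ × ℕ => q p.1 * r ^ p.2)
      (hqsum.mul_of_nonneg (summable_geometric_of_lt_one hr0.le hr1)
        (fun j => (hq0 j).le) (fun n => pow_nonneg hr0.le n))
    rintro ⟨j, n⟩
    have hnorm : ‖-((-q j) ^ (n + 1) / ((n : ℝ) + 1))‖ = q j ^ (n + 1) / ((n : ℝ) + 1) := by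
      rw [Real.norm_eq_abs, abs_neg, abs_div, abs_pow, abs_neg, abs_of_pos (hq0 j),
        abs_of_pos (by positivity : (0 : ℝ) < (n : ℝ) + 1)]
    rw [hnorm]
    have h1 : q j ^ (n + 1) ≤ q j * r ^ n := by
      calc q j ^ (n + 1) = q j * q j ^ n := by ring
      _ ≤ q j * r ^ n :=
        mul_le_mul_of_nonneg_left (pow_le_pow_left₀ (hq0 j).le (hqr j) n) (hq0 j).le
    have h2 : q j ^ (n + 1) / ((n : ℝ) + 1) ≤ q j ^ (n + 1) :=
      div_le_self (pow_nonneg (hq0 j).le _) (by simp)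
    linarith
  have hlog := log_sinh_hasSum y h0
  have htot : HasSum (fun p : ℕ × ℕ => -((-q p.1) ^ (p.2 + 1) / ((p.2 : ℝ) + 1)))
      (Real.log (Real.sinh y / y)) := by
    have h2 := hFsummable.hasSum
    have h3 := h2.prod_fiberwise fun j => hF j
    rwa [h3.unique hlog] at h2
  have hswap : HasSum (fun p : ℕ × ℕ => -((-q p.2) ^ (p.1 + 1) / ((p.1 : ℝ) + 1)))
      (Real.log (Real.sinh y / y)) := by
    have := (Equiv.prodComm ℕ ℕ).hasSum_iff.mpr htot
    simpa [Function.comp_def] using this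
  refine hswap.prod_fiberwise fun n => ?_
  -- fiber over n
  have hz := hasSum_zeta_nat (k := n + 1) n.succ_ne_zero
  have hz1 : HasSum (fun j : ℕ => 1 / (((j : ℝ) + 1)) ^ (2 * (n + 1)))
      ((-1 : ℝ) ^ (n + 1 + 1) * (2 : ℝ) ^ (2 * (n + 1) - 1) * π ^ (2 * (n + 1)) *
        (bernoulli (2 * (n + 1)) : ℝ) / (2 * (n + 1))!) := by
    have h4 := (hasSum_nat_add_iff'
      (f := fun m : ℕ => 1 / (m : ℝ) ^ (2 * (n + 1))) 1).mpr hz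
    simpa using h4
  have hz2 := hz1.mul_left ((-1 : ℝ) ^ n * r ^ (n + 1) / ((n : ℝ) + 1))
  have heq : (fun j : ℕ => (-1 : ℝ) ^ n * r ^ (n + 1) / ((n : ℝ) + 1) *
      (1 / (((j : ℝ) + 1)) ^ (2 * (n + 1)))) =
      fun j : ℕ => -((-q j) ^ (n + 1) / ((n : ℝ) + 1)) := by
    funext j
    have hd : ((j : ℝ) + 1) ≠ 0 := by positivity
    have hn1 : ((n : ℝ) + 1) ≠ 0 := by positivity
    rw [hqdef]
    simp only []
    rw [show (-(r / ((j : ℝ) + 1) ^ 2)) ^ (n + 1)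
        = (-1 : ℝ) ^ (n + 1) * (r / ((j : ℝ) + 1) ^ 2) ^ (n + 1) from by rw [neg_pow]]
    rw [pow_succ (-1 : ℝ) n, pow_mul]
    simp only [div_pow, ← pow_mul]
    field_simp
  exact heq ▸ hz2



lemma zeta_re (k : ℕ) : riemannZeta (1 - 2 * ((k : ℂ) + 1)) =
    ((-((bernoulli (2 * (k + 1)) : ℝ) / (2 * (k + 1))) : ℝ) : ℂ) := by
  rw [show (1 - 2 * ((k : ℂ) + 1)) = -((2 * k + 1 : ℕ) : ℂ) by push_cast; ring,
    riemannZeta_neg_nat_eq_bernoulli]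
  have h : ((-1 : ℂ)) ^ (2 * k + 1) = -1 := Odd.neg_one_pow ⟨k, by ring⟩
  rw [h]
  push_cast
  ring

/-- For real `x` with `0 < |x| < 2π`, the series `Σ_{k≥1} ζ(1-2k) x^(2k)/(2k)!`
converges and `ln((e^x-1)/x) = x/2 - Σ_{k≥1} ζ(1-2k) x^(2k)/(2k)!`. -/
theorem stmt1 (x : ℝ) (hx0 : 0 < |x|) (hx : |x| < 2 * Real.pi) :
    HasSum (fun k : ℕ =>
      (riemannZeta (1 - 2 * ((k : ℂ) + 1))).re * x ^ (2 * (k + 1)) /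
        (Nat.factorial (2 * (k + 1)) : ℝ))
      (x / 2 - Real.log ((Real.exp x - 1) / x)) := by
  have hx' : x ≠ 0 := by
    intro h; rw [h] at hx0; simp at hx0
  have h0 : x / 2 ≠ 0 := by simpa using hx'
  have h1 : |x / 2| < π := by
    rw [abs_div, abs_of_pos (by norm_num : (0:ℝ) < 2)]
    linarith
  have hsp := sinh_div_pos (x / 2) h0
  have hd := (double_sum (x / 2) h0 h1).neg
  have key : ∀ k : ℕ,
      -((-1 : ℝ) ^ k * ((x / 2 / π) ^ 2) ^ (k + 1) / ((k : ℝ) + 1) *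
        ((-1 : ℝ) ^ (k + 1 + 1) * (2 : ℝ) ^ (2 * (k + 1) - 1) * π ^ (2 * (k + 1)) *
          (bernoulli (2 * (k + 1)) : ℝ) / (2 * (k + 1))!)) =
      (riemannZeta (1 - 2 * ((k : ℂ) + 1))).re * x ^ (2 * (k + 1)) /
        (Nat.factorial (2 * (k + 1)) : ℝ) := by
    intro k
    rw [zeta_re k, Complex.ofReal_re]
    rw [show 2 * (k + 1) - 1 = 2 * k + 1 from by omega]
    have hπ : (π : ℝ) ≠ 0 := Real.pi_ne_zero
    have hk1 : ((k : ℝ) + 1) ≠ 0 := by positivity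
    have hfa : ((2 * (k + 1))! : ℝ) ≠ 0 := Nat.cast_ne_zero.mpr (Nat.factorial_ne_zero _)
    have h2 : (-1 : ℝ) ^ (k + 1 + 1) = (-1 : ℝ) ^ k := by
      rw [pow_succ, pow_succ]; ring
    rw [h2, show (2 : ℝ) ^ (2 * k + 1) = 4 ^ k * 2 from by
      rw [pow_succ, pow_mul]; norm_num]
    rcases Nat.even_or_odd k with hk | hk
    · simp only [hk.neg_one_pow]
      simp only [div_pow, ← pow_mul]
      field_simp
      ring_nf
      rw [pow_mul']
      norm_num
    · simp only [hk.neg_one_pow]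
      simp only [div_pow, ← pow_mul]
      field_simp
      ring_nf
      rw [pow_mul']
      norm_num
  rw [funext key] at hd
  have hlogid : Real.log ((Real.exp x - 1) / x) =
      x / 2 + Real.log (Real.sinh (x / 2) / (x / 2)) := by
    have e1 : Real.exp (x / 2) ^ 2 = Real.exp x := by
      rw [sq, ← Real.exp_add, add_halves]
    have e2 : Real.exp (x / 2) * Real.exp (-x / 2) = 1 := by
      have h : x / 2 + -x / 2 = 0 := by ring
      rw [← Real.exp_add, h, Real.exp_zero]
    have hprod : (Real.exp x - 1) / x = Real.exp (x / 2) * (Real.sinh (x / 2) / (x / 2)) := by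
      rw [Real.sinh_eq, show -(x / 2) = -x / 2 from by ring]
      field_simp
      rw [neg_div] at e2
      linear_combination e2 - e1
    rw [hprod, Real.log_mul (Real.exp_ne_zero _) hsp.ne', Real.log_exp]
  have hval : -Real.log (Real.sinh (x / 2) / (x / 2)) =
      x / 2 - Real.log ((Real.exp x - 1) / x) := by
    rw [hlogid]; ring
  rwa [hval] at hd
end

section
/- For every integer k ≥ 1, the Bernoulli numbers satisfy the recursive relation B_{2k} = (k/((2^{2k} − 1)·2^{2k−1}))·[1 − Σ_{ℓ=1}^{k−1} C(2k−1, 2ℓ−1)·(2^{2ℓ} − 1)·2^{2ℓ}·B_{2ℓ}/(2ℓ)], where an empty sum (the case k = 1) is 0. -/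
namespace BernoulliStmt2Aux
open PowerSeries Finset

local notation "E" => PowerSeries.exp ℚ
local notation "B" => bernoulliPowerSeries ℚ

lemma hCn (n : ℕ) [n.AtLeastTwo] : (C (OfNat.ofNat n) : ℚ⟦X⟧) = OfNat.ofNat n :=
  map_ofNat _ n

lemma hne1 : rescale (2:ℚ) E - 1 ≠ 0 := by
  intro h
  have := congrArg (coeff 1) h
  simp [coeff_rescale, coeff_exp] at this

lemma hne2 : rescale (2:ℚ) E + 1 ≠ 0 := by
  intro h
  have := congrArg (constantCoeff) h
  simp [← coeff_zero_eq_constantCoeff, coeff_rescale, coeff_exp] at this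

lemma step1 : (rescale (2:ℚ) E + 1) * (rescale 4 B - rescale 2 B) = -(2 * X) := by
  have h4 : rescale (4:ℚ) B * (rescale 4 E - 1) = 4 * X := by
    have := congrArg (rescale (4:ℚ)) (bernoulliPowerSeries_mul_exp_sub_one ℚ)
    simpa [map_mul, map_sub, map_one, rescale_X, hCn, map_ofNat] using this
  have h2 : rescale (2:ℚ) B * (rescale 2 E - 1) = 2 * X := by
    have := congrArg (rescale (2:ℚ)) (bernoulliPowerSeries_mul_exp_sub_one ℚ)
    simpa [map_mul, map_sub, map_one, rescale_X, hCn, map_ofNat] using this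
  have hsq : rescale (2:ℚ) E * rescale (2:ℚ) E = rescale (4:ℚ) E := by
    have := exp_mul_exp_eq_exp_add (2:ℚ) 2
    norm_num at this
    exact this
  apply mul_left_cancel₀ hne1
  linear_combination h4 - (rescale (2:ℚ) E + 1) * h2 + (rescale 4 B) * hsq

lemma step2 : rescale (-1:ℚ) (E * (rescale 4 B - rescale 2 B)) + E * (rescale 4 B - rescale 2 B) = 0 := by
  have hs1' : (rescale (-2:ℚ) E + 1) *
      (rescale (-1:ℚ) (rescale (4:ℚ) B) - rescale (-1:ℚ) (rescale (2:ℚ) B)) = 2 * X := by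
    have := congrArg (rescale (-1:ℚ)) step1
    simp only [map_mul, map_add, map_neg, map_one, map_sub, rescale_rescale, rescale_X,
      map_ofNat] at this ⊢
    norm_num at this ⊢
    exact this
  have hmul1 : rescale (2:ℚ) E * rescale (-1:ℚ) E = E := by
    have := exp_mul_exp_eq_exp_add (2:ℚ) (-1)
    norm_num [rescale_one] at this
    exact this
  have hmul2 : E * rescale (-2:ℚ) E = rescale (-1:ℚ) E := by
    have := exp_mul_exp_eq_exp_add (1:ℚ) (-2)
    norm_num [rescale_one] at this
    exact this
  have key : (rescale (2:ℚ) E + 1) *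
      (rescale (-1:ℚ) (E * (rescale 4 B - rescale 2 B)) + E * (rescale 4 B - rescale 2 B)) = 0 := by
    simp only [map_mul, map_sub]
    linear_combination (rescale (-1:ℚ) (rescale (4:ℚ) B) - rescale (-1:ℚ) (rescale (2:ℚ) B)) * hmul1
      + E * hs1'
      - (rescale (-1:ℚ) (rescale (4:ℚ) B) - rescale (-1:ℚ) (rescale (2:ℚ) B)) * hmul2
      + E * step1
  rcases mul_eq_zero.mp key with h | h
  · exact absurd h hne2
  · exact h

lemma sum_choose (n : ℕ) (hn : Even n) :
    ∑ i ∈ range (n + 1), (n.choose i : ℚ) * (4 ^ i - 2 ^ i) * bernoulli i = 0 := by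
  have h0 := congrArg (coeff n) step2
  rw [map_add, coeff_rescale, hn.neg_one_pow, one_mul, map_zero] at h0
  have hc : coeff n (E * (rescale 4 B - rescale 2 B)) = 0 := by linarith
  rw [coeff_mul, Finset.Nat.sum_antidiagonal_eq_sum_range_succ_mk] at hc
  have hrefl : ∑ i ∈ range (n + 1), (n.choose i : ℚ) * (4 ^ i - 2 ^ i) * bernoulli i
      = ∑ i ∈ range (n + 1), (n.choose (n - i) : ℚ) * (4 ^ (n - i) - 2 ^ (n - i)) * bernoulli (n - i) := by
    rw [← Finset.sum_range_reflect]
    simp only [Nat.add_sub_cancel]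
  have he : ∑ i ∈ range (n + 1), (n.choose (n - i) : ℚ) * (4 ^ (n - i) - 2 ^ (n - i)) * bernoulli (n - i)
      = ∑ i ∈ range (n + 1),
        (n.factorial : ℚ) * (coeff i E * coeff (n - i) (rescale 4 B - rescale 2 B)) := by
    refine sum_congr rfl fun i hi => ?_
    have hin : i ≤ n := Nat.lt_succ_iff.mp (mem_range.mp hi)
    have h1 : (i.factorial : ℚ) ≠ 0 := by exact_mod_cast Nat.factorial_ne_zero i
    have h2 : (((n - i) : ℕ).factorial : ℚ) ≠ 0 := by exact_mod_cast Nat.factorial_ne_zero (n - i)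
    simp only [map_sub, coeff_rescale, bernoulliPowerSeries, coeff_mk, coeff_exp,
      Algebra.algebraMap_self, RingHom.id_apply]
    rw [Nat.choose_symm hin, Nat.cast_choose ℚ hin]
    field_simp
  rw [hrefl, he, ← mul_sum]
  simp only [Nat.succ_eq_add_one] at hc
  rw [hc, mul_zero]

lemma aux_sum (k : ℕ) (hk : 1 ≤ k) :
    ∑ ℓ ∈ Icc 1 k, ((2 * k).choose (2 * ℓ) : ℚ) * (4 ^ (2 * ℓ) - 2 ^ (2 * ℓ)) * bernoulli (2 * ℓ)
      = 2 * k := by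
  set f : ℕ → ℚ := fun i => ((2 * k).choose i : ℚ) * (4 ^ i - 2 ^ i) * bernoulli i with hf
  have h0 : ∑ i ∈ range (2 * k + 1), f i = 0 := sum_choose (2 * k) (even_two_mul k)
  set T : Finset ℕ := insert 1 ((Icc 1 k).image (fun ℓ => 2 * ℓ)) with hTdef
  have hsub : T ⊆ range (2 * k + 1) := by
    intro i hi
    rcases mem_insert.mp hi with rfl | hi
    · exact mem_range.mpr (by omega)
    · rcases mem_image.mp hi with ⟨ℓ, hℓ, rfl⟩
      rcases mem_Icc.mp hℓ with ⟨_, h2⟩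
      exact mem_range.mpr (by omega)
  have hzero : ∀ i ∈ range (2 * k + 1), i ∉ T → f i = 0 := by
    intro i hi hiT
    rcases Nat.even_or_odd i with he | ho
    · rcases he with ⟨ℓ, rfl⟩
      rcases Nat.eq_zero_or_pos ℓ with rfl | hl
      · simp [hf]
      · exfalso
        exact hiT (mem_insert_of_mem (mem_image.mpr ⟨ℓ,
          mem_Icc.mpr ⟨hl, by have := mem_range.mp hi; omega⟩, by ring⟩))
    · have h1 : i ≠ 1 := fun h => hiT (by simp [hTdef, h])
      have hlt : 1 < i := by rcases ho with ⟨m, rfl⟩; omega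
      have hodd : bernoulli i = 0 := by
        rw [bernoulli, bernoulli'_eq_zero_of_odd ho hlt, mul_zero]
      simp [hf, hodd]
  have hT : ∑ i ∈ T, f i = 0 := by rw [Finset.sum_subset hsub hzero]; exact h0
  have hnm : (1 : ℕ) ∉ (Icc 1 k).image (fun ℓ => 2 * ℓ) := by
    intro h
    rcases mem_image.mp h with ⟨ℓ, _, h2⟩
    omega
  rw [sum_insert hnm, Finset.sum_image (fun x _ y _ h => by omega)] at hT
  have hf1 : f 1 = -(2 * k) := by
    simp [hf, Nat.choose_one_right, bernoulli_one]
    ring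
  rw [hf1] at hT
  linarith

lemma qstmt (k : ℕ) (hk : 1 ≤ k) :
    bernoulli (2 * k) =
      (k : ℚ) / ((2 ^ (2 * k) - 1) * 2 ^ (2 * k - 1)) *
        (1 - ∑ ℓ ∈ Icc 1 (k - 1),
          ((2 * k - 1).choose (2 * ℓ - 1) : ℚ) * (2 ^ (2 * ℓ) - 1) * 2 ^ (2 * ℓ) *
            bernoulli (2 * ℓ) / (2 * ℓ)) := by
  obtain ⟨m, rfl⟩ : ∃ m, k = m + 1 := ⟨k - 1, by omega⟩
  simp only [Nat.add_sub_cancel]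
  have ha := aux_sum (m + 1) (by omega)
  rw [Finset.sum_Icc_succ_top (by omega : 1 ≤ m + 1)] at ha
  have hchoose : (2 * (m + 1)).choose (2 * (m + 1)) = 1 := Nat.choose_self _
  rw [hchoose] at ha
  have hM : ((2 : ℚ) * (m + 1)) ≠ 0 := by positivity
  have hsum : ∑ ℓ ∈ Icc 1 m,
        ((2 * (m + 1) - 1).choose (2 * ℓ - 1) : ℚ) * (2 ^ (2 * ℓ) - 1) * 2 ^ (2 * ℓ) *
          bernoulli (2 * ℓ) / (2 * ℓ)
      = (∑ ℓ ∈ Icc 1 m,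
          ((2 * (m + 1)).choose (2 * ℓ) : ℚ) * (4 ^ (2 * ℓ) - 2 ^ (2 * ℓ)) * bernoulli (2 * ℓ))
        / (2 * (m + 1)) := by
    rw [Finset.sum_div]
    refine sum_congr rfl fun ℓ hℓ => ?_
    have hℓ1 : 1 ≤ ℓ := (mem_Icc.mp hℓ).1
    have hnat : 2 * (m + 1) * ((2 * (m + 1) - 1).choose (2 * ℓ - 1))
        = (2 * (m + 1)).choose (2 * ℓ) * (2 * ℓ) := by
      have h := Nat.add_one_mul_choose_eq (2 * m + 1) (2 * ℓ - 1)
      have e2 : 2 * ℓ - 1 + 1 = 2 * ℓ := by omega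
      rw [e2] at h
      simpa [show 2 * (m + 1) - 1 = 2 * m + 1 by omega,
        show (2 * m + 1).succ = 2 * (m + 1) by omega,
        show 2 * m + 1 + 1 = 2 * (m + 1) by omega] using h
    have hq : (2 * ((m : ℚ) + 1)) * ((2 * (m + 1) - 1).choose (2 * ℓ - 1) : ℚ)
        = ((2 * (m + 1)).choose (2 * ℓ) : ℚ) * (2 * ℓ) := by exact_mod_cast hnat
    have hℓ0 : ((2 : ℚ) * ℓ) ≠ 0 := by positivity
    have h4 : (4 : ℚ) ^ (2 * ℓ) = 2 ^ (2 * ℓ) * 2 ^ (2 * ℓ) := by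
      rw [show (4 : ℚ) = 2 * 2 by norm_num, mul_pow]
    rw [h4]
    field_simp
    push_cast at hq ⊢
    linear_combination ((2 : ℚ) ^ (2 * ℓ) - 1) * bernoulli (2 * ℓ) / 2 * hq
  rw [hsum]
  have h4N : (4 : ℚ) ^ (2 * (m + 1)) = 2 ^ (2 * (m + 1)) * 2 ^ (2 * (m + 1)) := by
    rw [show (4 : ℚ) = 2 * 2 by norm_num, mul_pow]
  rw [h4N] at ha
  have h2N : (2 : ℚ) ^ (2 * (m + 1)) = 2 * 2 ^ (2 * (m + 1) - 1) := by
    conv_lhs => rw [show 2 * (m + 1) = 2 * (m + 1) - 1 + 1 from by omega]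
    rw [pow_succ']
  have hgt : (1 : ℚ) < 2 ^ (2 * (m + 1)) := by
    apply one_lt_pow₀ (by norm_num) (by omega)
  have hx0 : (2 : ℚ) ^ (2 * (m + 1) - 1) ≠ 0 := pow_ne_zero _ two_ne_zero
  have hx1 : (2 : ℚ) ^ (2 * (m + 1)) - 1 ≠ 0 := by linarith
  rw [h2N] at ha hx1 ⊢
  set S := ∑ ℓ ∈ Icc 1 m,
      ((2 * (m + 1)).choose (2 * ℓ) : ℚ) * (4 ^ (2 * ℓ) - 2 ^ (2 * ℓ)) * bernoulli (2 * ℓ) with hS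
  set x := (2 : ℚ) ^ (2 * (m + 1) - 1) with hxdef
  push_cast at ha ⊢
  field_simp
  linear_combination ha

end BernoulliStmt2Aux

open BernoulliStmt2Aux in
/-- recursive relation
`B_{2k} = (k/((2^{2k}-1) 2^{2k-1})) (1 - Σ_{ℓ=1}^{k-1} C(2k-1,2ℓ-1)(2^{2ℓ}-1) 2^{2ℓ} B_{2ℓ}/(2ℓ))`. -/
theorem stmt2 (k : ℕ) (hk : 1 ≤ k) :
    ((bernoulli (2 * k) : ℚ) : ℝ) =
      (k : ℝ) / ((2 ^ (2 * k) - 1) * 2 ^ (2 * k - 1)) *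
        (1 - ∑ ℓ ∈ Finset.Icc 1 (k - 1),
          (Nat.choose (2 * k - 1) (2 * ℓ - 1) : ℝ) * (2 ^ (2 * ℓ) - 1) * 2 ^ (2 * ℓ) *
            ((bernoulli (2 * ℓ) : ℚ) : ℝ) / (2 * (ℓ : ℝ))) := by
  have h := congrArg (fun q : ℚ => (q : ℝ)) (qstmt k hk)
  rw [h]
  push_cast
  ring
end

section
/- For every integer k ≥ 1, the combinatorial identity Σ_{ℓ=1}^{2k+1} ((−1)^ℓ/ℓ)·C(4k+2, 2k+ℓ+1)·S(2k+ℓ+1, ℓ) = 0 holds. -/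
namespace Stmt6Aux

open Finset

/-- power sums `0^k + 1^k + ⋯ + m^k` -/
def pn (k m : ℕ) : ℕ := ∑ i ∈ range (m + 1), i ^ k

lemma pn_succ (k m : ℕ) : pn k (m + 1) = pn k m + (m + 1) ^ k := by
  simp [pn, Finset.sum_range_succ]

lemma pn_zero (k : ℕ) (hk : 1 ≤ k) : pn k 0 = 0 := by
  cases k with
  | zero => omega
  | succ k => simp [pn]

lemma s2_le (m j : ℕ) : stirlingS2 m (m + j + 1) = 0 := by
  induction m generalizing j with
  | zero => rfl
  | succ m ih =>
    rw [show m + 1 + j + 1 = (m + j + 1) + 1 by omega]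
    show (m + j + 1 + 1) * stirlingS2 m (m + j + 1 + 1) + stirlingS2 m (m + j + 1) = 0
    have h1 := ih (j + 1)
    have h2 := ih j
    simp only [show m + (j + 1) + 1 = m + j + 1 + 1 by omega] at h1
    simp [h1, h2]

lemma s2_self (m : ℕ) : stirlingS2 m m = 1 := by
  induction m with
  | zero => rfl
  | succ m ih =>
    show (m + 1) * stirlingS2 m (m + 1) + stirlingS2 m m = 1
    have h1 := s2_le m 0
    simp only [Nat.add_zero] at h1
    simp [h1, ih]

lemma s2_zero (n : ℕ) : stirlingS2 (n + 1) 0 = 0 := rfl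

/-- `h j m = S(j+m, m)`, the basic recurrence -/
lemma hrec (j m : ℕ) :
    stirlingS2 (j + 1 + (m + 1)) (m + 1)
      = (m + 1) * stirlingS2 (j + (m + 1)) (m + 1) + stirlingS2 (j + 1 + m) m := by
  have : stirlingS2 ((j + m + 1) + 1) (m + 1)
      = (m + 1) * stirlingS2 (j + m + 1) (m + 1) + stirlingS2 (j + m + 1) m := rfl
  simpa [show j + 1 + (m + 1) = j + m + 1 + 1 by omega,
    show j + (m + 1) = j + m + 1 by omega, show j + 1 + m = j + m + 1 by omega] using this

/-- Lemma L: `∑_{i=0}^{n} (m+1)^{i+1} S((n-i)+m, m) = (m+1) S(n+(m+1), m+1)` -/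
lemma lemL (n m : ℕ) :
    ∑ i ∈ range (n + 1), (m + 1) ^ (i + 1) * stirlingS2 ((n - i) + m) m
      = (m + 1) * stirlingS2 (n + (m + 1)) (m + 1) := by
  induction n with
  | zero => simp [s2_self]
  | succ n ih =>
    rw [Finset.sum_range_succ']
    have e1 : ∀ i ∈ range (n + 1),
        (m + 1) ^ (i + 1 + 1) * stirlingS2 ((n + 1 - (i + 1)) + m) m
          = (m + 1) * ((m + 1) ^ (i + 1) * stirlingS2 ((n - i) + m) m) := by
      intro i hi
      have : n + 1 - (i + 1) = n - i := by omega
      rw [this]; ring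
    rw [Finset.sum_congr rfl e1, ← Finset.mul_sum, ih]
    have : n + 1 - 0 = n + 1 := rfl
    rw [this, hrec n m]
    ring

/-- Newton's identity for complete homogeneous symmetric polynomials of `1,…,m`:
`(n+1)·S(n+1+m, m) = ∑_{k=1}^{n+1} p_k(m)·S((n+1-k)+m, m)`. -/
lemma newton_nat (n : ℕ) : ∀ m : ℕ, (n + 1) * stirlingS2 ((n + 1) + m) m
    = ∑ i ∈ range (n + 1), pn (i + 1) m * stirlingS2 ((n - i) + m) m := by
  induction n using Nat.strong_induction_on with
  | _ n IH =>
    intro m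
    induction m with
    | zero =>
      have h0 : ∀ i ∈ range (n + 1), pn (i + 1) 0 * stirlingS2 ((n - i) + 0) 0 = 0 := by
        intro i _
        rw [pn_zero _ (by omega), Nat.zero_mul]
      rw [Finset.sum_eq_zero h0]
      simp [s2_zero]
    | succ m ihm =>
      -- decompose the RHS
      have key : ∑ i ∈ range (n + 1), pn (i + 1) (m + 1) * stirlingS2 ((n - i) + (m + 1)) (m + 1)
          = (m + 1) * (∑ i ∈ range n, pn (i + 1) (m + 1) * stirlingS2 ((n - 1 - i) + (m + 1)) (m + 1))
            + ∑ i ∈ range (n + 1), pn (i + 1) (m + 1) * stirlingS2 ((n - i) + m) m := by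
        rw [Finset.sum_range_succ, Finset.sum_range_succ (f := fun i => pn (i + 1) (m + 1) * stirlingS2 ((n - i) + m) m)]
        rw [Nat.sub_self]
        have e1 : ∀ i ∈ range n,
            pn (i + 1) (m + 1) * stirlingS2 ((n - i) + (m + 1)) (m + 1)
              = (m + 1) * (pn (i + 1) (m + 1) * stirlingS2 ((n - 1 - i) + (m + 1)) (m + 1))
                + pn (i + 1) (m + 1) * stirlingS2 ((n - i) + m) m := by
          intro i hi
          have hilt : i < n := Finset.mem_range.mp hi
          have e2 : n - i = (n - 1 - i) + 1 := by omega
          rw [e2, hrec (n - 1 - i) m]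
          ring
        rw [Finset.sum_congr rfl e1, Finset.sum_add_distrib, ← Finset.mul_sum]
        simp only [Nat.zero_add, s2_self]
        ring
      -- the inner sum via strong induction (Newton at n-1)
      have hA : ∑ i ∈ range n, pn (i + 1) (m + 1) * stirlingS2 ((n - 1 - i) + (m + 1)) (m + 1)
          = n * stirlingS2 (n + (m + 1)) (m + 1) := by
        cases n with
        | zero => simp
        | succ n' =>
          have := (IH n' (by omega) (m + 1)).symm
          simpa using this
      -- the second sum via `ihm` and `lemL`
      have hB : ∑ i ∈ range (n + 1), pn (i + 1) (m + 1) * stirlingS2 ((n - i) + m) m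
          = (n + 1) * stirlingS2 ((n + 1) + m) m
            + (m + 1) * stirlingS2 (n + (m + 1)) (m + 1) := by
        have e3 : ∀ i ∈ range (n + 1),
            pn (i + 1) (m + 1) * stirlingS2 ((n - i) + m) m
              = pn (i + 1) m * stirlingS2 ((n - i) + m) m
                + (m + 1) ^ (i + 1) * stirlingS2 ((n - i) + m) m := by
          intro i _
          rw [pn_succ]
          ring
        rw [Finset.sum_congr rfl e3, Finset.sum_add_distrib, ← ihm, lemL]
      rw [key, hA, hB, hrec n m]
      ring


open Polynomial

lemma bernoulli_natDegree_le (n : ℕ) : (Polynomial.bernoulli n).natDegree ≤ n := by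
  rw [Polynomial.bernoulli]
  apply Polynomial.natDegree_sum_le_of_forall_le
  intro i _
  exact (Polynomial.natDegree_monomial_le _).trans (Nat.sub_le _ _)

/-- Faulhaber polynomial: `Pk k` evaluates at `m : ℕ` to `0^k + 1^k + ⋯ + m^k`. -/
noncomputable def Pk (k : ℕ) : ℚ[X] :=
  C (1 / ((k : ℚ) + 1)) * ((Polynomial.bernoulli (k + 1)).comp (X + 1)
    - C (bernoulli' (k + 1)))

lemma Pk_eval_zero (k : ℕ) : (Pk k).eval 0 = 0 := by
  simp [Pk]

lemma Pk_eval_add_one (k : ℕ) (x : ℚ) :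
    (Pk k).eval (x + 1) = (Pk k).eval x + (x + 1) ^ k := by
  have hb := Polynomial.bernoulli_eval_one_add (k + 1) (x + 1)
  have hne : ((k : ℚ) + 1) ≠ 0 := by positivity
  simp only [Pk, eval_mul, eval_C, eval_sub, eval_comp, eval_add, eval_X, eval_one]
  rw [show x + 1 + 1 = 1 + (x + 1) by ring, hb]
  push_cast [Nat.add_sub_cancel]
  field_simp
  ring

lemma Pk_natDegree_le (k : ℕ) : (Pk k).natDegree ≤ k + 1 := by
  refine (Polynomial.natDegree_C_mul_le _ _).trans ?_
  refine (Polynomial.natDegree_sub_le _ _).trans ?_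
  rw [max_le_iff]
  constructor
  · rw [Polynomial.natDegree_comp]
    have h1 : (X + 1 : ℚ[X]).natDegree = 1 := by
      rw [show (X + 1 : ℚ[X]) = X + C 1 by simp, Polynomial.natDegree_X_add_C]
    rw [h1, Nat.mul_one]
    exact bernoulli_natDegree_le _
  · simp

lemma Pk_eval_nat (k m : ℕ) (hk : 1 ≤ k) : (Pk k).eval (m : ℚ) = (pn k m : ℚ) := by
  have hb := Polynomial.bernoulli_succ_eval (m + 1) k
  have hb' : _root_.bernoulli (k + 1) = bernoulli' (k + 1) :=
    bernoulli_eq_bernoulli'_of_ne_one (by omega)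
  have hne : ((k : ℚ) + 1) ≠ 0 := by positivity
  simp only [Pk, eval_mul, eval_C, eval_sub, eval_comp, eval_add, eval_X, eval_one]
  rw [show (m : ℚ) + 1 = ((m + 1 : ℕ) : ℚ) by push_cast; ring]
  rw [Nat.succ_eq_add_one] at hb
  rw [hb, hb']
  rw [show pn k m = ∑ i ∈ range (m + 1), i ^ k from rfl]
  push_cast
  field_simp
  ring

lemma Pk_deriv_zero (k : ℕ) : ((derivative (Pk k)).eval 0) = bernoulli' k := by
  have hne : ((k : ℚ) + 1) ≠ 0 := by positivity
  rw [Pk, Polynomial.derivative_C_mul, Polynomial.derivative_sub,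
    Polynomial.derivative_C, sub_zero, Polynomial.derivative_comp,
    Polynomial.derivative_bernoulli_add_one]
  simp only [Polynomial.derivative_add, Polynomial.derivative_X,
    Polynomial.derivative_one, add_zero, eval_mul, eval_C, eval_comp, eval_add,
    eval_X, eval_one, zero_add, one_mul, Polynomial.eval_natCast]
  field_simp
  exact Polynomial.bernoulli_eval_one k

/-- discrete integration: `(discInt p)(x) - (discInt p)(x-1) = p(x)`, `(discInt p)(0) = 0`. -/
noncomputable def discInt (p : ℚ[X]) : ℚ[X] := p.sum fun k a => C a * Pk k

lemma discInt_eval_zero (p : ℚ[X]) : (discInt p).eval 0 = 0 := by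
  rw [discInt, Polynomial.sum, Polynomial.eval_finset_sum]
  apply Finset.sum_eq_zero
  intro k _
  simp [Pk_eval_zero]

lemma discInt_eval_add_one (p : ℚ[X]) (x : ℚ) :
    (discInt p).eval (x + 1) = (discInt p).eval x + p.eval (x + 1) := by
  rw [discInt, Polynomial.sum, Polynomial.eval_finset_sum, Polynomial.eval_finset_sum]
  have e : ∀ k ∈ p.support, (C (p.coeff k) * Pk k).eval (x + 1)
      = (C (p.coeff k) * Pk k).eval x + p.coeff k * (x + 1) ^ k := by
    intro k _
    simp only [eval_mul, eval_C, Pk_eval_add_one]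
    ring
  rw [Finset.sum_congr rfl e, Finset.sum_add_distrib]
  congr 1
  rw [Polynomial.eval_eq_sum, Polynomial.sum]

lemma discInt_natDegree_le (p : ℚ[X]) (d : ℕ) (h : p.natDegree ≤ d) :
    (discInt p).natDegree ≤ d + 1 := by
  rw [discInt, Polynomial.sum]
  apply Polynomial.natDegree_sum_le_of_forall_le
  intro k hk
  refine (Polynomial.natDegree_C_mul_le _ _).trans ?_
  refine (Pk_natDegree_le k).trans ?_
  have := Polynomial.le_natDegree_of_mem_supp k hk
  omega


/-- `HH n` is the polynomial with `(HH n).eval ℓ = S(n+ℓ, ℓ)`. -/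
noncomputable def HH : ℕ → ℚ[X]
  | 0 => 1
  | n + 1 => discInt (X * HH n)

lemma HH_eval_zero (n : ℕ) : (HH (n + 1)).eval 0 = 0 := discInt_eval_zero _

lemma HH_eval_add_one (n : ℕ) (x : ℚ) :
    (HH (n + 1)).eval (x + 1) = (HH (n + 1)).eval x + (x + 1) * (HH n).eval (x + 1) := by
  show (discInt (X * HH n)).eval (x + 1) = _
  rw [discInt_eval_add_one]
  simp only [eval_mul, eval_X]
  rfl

lemma HH_natDegree_le (n : ℕ) : (HH n).natDegree ≤ 2 * n := by
  induction n with
  | zero => simp [HH]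
  | succ n ih =>
    show (discInt (X * HH n)).natDegree ≤ 2 * (n + 1)
    have h1 : (X * HH n).natDegree ≤ 2 * n + 1 := by
      refine (Polynomial.natDegree_mul_le).trans ?_
      simp only [Polynomial.natDegree_X]
      omega
    have := discInt_natDegree_le _ _ h1
    omega

lemma HH_eval_nat (n : ℕ) : ∀ m : ℕ, (HH n).eval (m : ℚ) = (stirlingS2 (n + m) m : ℚ) := by
  induction n with
  | zero => intro m; simp [HH, s2_self]
  | succ n ih =>
    intro m
    induction m with
    | zero => simpa [s2_zero] using HH_eval_zero n
    | succ m ihm =>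
      have h1 := HH_eval_add_one n (m : ℚ)
      have h2 := ih (m + 1)
      push_cast at h2 ⊢
      rw [h1, ihm, h2, hrec n m]
      push_cast
      ring

lemma HH_eval_neg (n : ℕ) : ∀ m : ℕ, 1 ≤ n → m ≤ n → (HH n).eval (-(m : ℚ)) = 0 := by
  induction n with
  | zero => intro m h; omega
  | succ n ih =>
    intro m _ hm
    induction m with
    | zero => simpa using HH_eval_zero n
    | succ m ihm =>
      have h1 := HH_eval_add_one n (-((m : ℚ) + 1))
      rw [show -((m : ℚ) + 1) + 1 = -(m : ℚ) by ring] at h1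
      have h2 : (HH (n + 1)).eval (-(m : ℚ)) = 0 := ihm (by omega)
      rcases Nat.eq_zero_or_pos m with hm0 | hm0
      · subst hm0
        simp only [Nat.cast_zero, neg_zero, zero_add] at h1 h2 ⊢
        rw [h2] at h1
        push_cast
        linarith [h1]
      · have h3 : (HH n).eval (-(m : ℚ)) = 0 := ih m (by omega) (by omega)
        rw [h2, h3] at h1
        push_cast
        linarith [h1]

lemma newton_poly (n : ℕ) :
    ((n : ℚ) + 1) • HH (n + 1) = ∑ i ∈ range (n + 1), Pk (i + 1) * HH (n - i) := by
  have key : ∀ m : ℕ, (((n : ℚ) + 1) • HH (n + 1)).eval (m : ℚ)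
      = (∑ i ∈ range (n + 1), Pk (i + 1) * HH (n - i)).eval (m : ℚ) := by
    intro m
    rw [Polynomial.eval_smul, Polynomial.eval_finset_sum]
    have e : ∀ i ∈ range (n + 1), (Pk (i + 1) * HH (n - i)).eval (m : ℚ)
        = ((pn (i + 1) m : ℚ)) * (stirlingS2 ((n - i) + m) m : ℚ) := by
      intro i _
      rw [eval_mul, Pk_eval_nat _ _ (by omega), HH_eval_nat]
    rw [Finset.sum_congr rfl e, HH_eval_nat]
    have := newton_nat n m
    have : ((n + 1) * stirlingS2 ((n + 1) + m) m : ℚ)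
        = ((∑ i ∈ range (n + 1), pn (i + 1) m * stirlingS2 ((n - i) + m) m : ℕ) : ℚ) := by
      exact_mod_cast congrArg (Nat.cast : ℕ → ℚ) this
    push_cast at this
    rw [smul_eq_mul]
    convert this using 2
  have h0 : ((n : ℚ) + 1) • HH (n + 1) - ∑ i ∈ range (n + 1), Pk (i + 1) * HH (n - i) = 0 := by
    apply Polynomial.eq_zero_of_infinite_isRoot
    apply Set.infinite_of_injective_forall_mem (f := (Nat.cast : ℕ → ℚ)) Nat.cast_injective
    intro m
    simp only [Set.mem_setOf_eq, Polynomial.IsRoot, Polynomial.eval_sub, key m, sub_self]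
  exact sub_eq_zero.mp h0

lemma HH_deriv_zero (n : ℕ) :
    (derivative (HH (n + 1))).eval 0 = bernoulli' (n + 1) / ((n : ℚ) + 1) := by
  have h := congrArg (fun p => (derivative p).eval 0) (newton_poly n)
  simp only [Polynomial.derivative_smul, Polynomial.derivative_sum,
    Polynomial.eval_smul, Polynomial.eval_finset_sum, smul_eq_mul] at h
  have e : ∀ i ∈ range (n + 1), (derivative (Pk (i + 1) * HH (n - i))).eval 0
      = if i = n then bernoulli' (n + 1) else 0 := by
    intro i hi
    rw [Polynomial.derivative_mul, Polynomial.eval_add, eval_mul, eval_mul,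
      Pk_eval_zero, Pk_deriv_zero, zero_mul, add_zero]
    by_cases hin : i = n
    · subst hin
      simp [Nat.sub_self, HH]
    · have hlt : i < n := by
        have := Finset.mem_range.mp hi
        omega
      have : n - i = (n - i - 1) + 1 := by omega
      rw [this, HH_eval_zero, mul_zero, if_neg hin]
  rw [Finset.sum_congr rfl e, Finset.sum_ite_eq' (range (n + 1)) n] at h
  rw [if_pos (Finset.mem_range.mpr (by omega))] at h
  have hne : ((n : ℚ) + 1) ≠ 0 := by positivity
  field_simp
  linarith [h]


lemma delta_eval (p : ℚ[X]) :
    fwdDiff (1:ℚ) (fun x : ℚ => p.eval x) = fun x : ℚ => (p.comp (X + 1) - p).eval x := by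
  funext x
  simp [fwdDiff, Polynomial.eval_comp]

lemma deg_delta (p : ℚ[X]) (h : p.natDegree ≠ 0) :
    (p.comp (X + 1) - p).natDegree < p.natDegree := by
  have hp0 : p ≠ 0 := by
    intro h0
    rw [h0] at h
    simp at h
  have hX1 : (X + 1 : ℚ[X]) = X + C 1 := by simp
  have hndX : (X + 1 : ℚ[X]).natDegree = 1 := by
    rw [hX1]; exact Polynomial.natDegree_X_add_C 1
  have hc0 : p.comp (X + 1) ≠ 0 := by
    intro hc
    rcases Polynomial.comp_eq_zero_iff.mp hc with h1 | ⟨_, hXC⟩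
    · exact hp0 h1
    · have := congrArg Polynomial.natDegree hXC
      rw [hndX, Polynomial.natDegree_C] at this
      omega
  have hncd : (p.comp (X + 1)).natDegree = p.natDegree := by
    rw [Polynomial.natDegree_comp, hndX, mul_one]
  have hcd : (p.comp (X + 1)).degree = p.degree := by
    rw [Polynomial.degree_eq_natDegree hc0, Polynomial.degree_eq_natDegree hp0, hncd]
  have hlcX : (X + 1 : ℚ[X]).leadingCoeff = 1 := by
    rw [hX1]; exact (Polynomial.monic_X_add_C 1).leadingCoeff
  have hlc : (p.comp (X + 1)).leadingCoeff = p.leadingCoeff := by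
    rw [Polynomial.leadingCoeff_comp (by rw [hndX]; omega), hlcX, one_pow, mul_one]
  have hdlt := Polynomial.degree_sub_lt hcd hc0 hlc
  rw [hcd] at hdlt
  by_cases hq0 : p.comp (X + 1) - p = 0
  · rw [hq0]
    simpa using Nat.pos_of_ne_zero h
  · exact Polynomial.natDegree_lt_natDegree hq0 hdlt

lemma iter_fwdDiff_zero (N : ℕ) :
    (fwdDiff (1:ℚ))^[N] (fun _ : ℚ => (0:ℚ)) = fun _ => 0 := by
  induction N with
  | zero => rfl
  | succ N ih =>
    rw [Function.iterate_succ_apply]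
    have h1 : fwdDiff (1:ℚ) (fun _ : ℚ => (0:ℚ)) = fun _ => 0 := by
      funext x; simp [fwdDiff]
    rw [h1, ih]

lemma iter_delta_zero (N : ℕ) : ∀ p : ℚ[X], p.natDegree < N →
    (fwdDiff (1:ℚ))^[N] (fun x : ℚ => p.eval x) = fun _ => 0 := by
  induction N with
  | zero => intro p hp; omega
  | succ N ih =>
    intro p hp
    rw [Function.iterate_succ_apply, delta_eval]
    by_cases h0 : p.natDegree = 0
    · obtain ⟨a, rfl⟩ := Polynomial.natDegree_eq_zero.mp h0
      have hz : (fun x : ℚ => ((C a).comp (X + 1) - C a).eval x) = fun _ => (0:ℚ) := by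
        funext x; simp
      rw [hz, iter_fwdDiff_zero]
    · have hd := deg_delta p h0
      exact ih _ (by omega)

lemma alt_sum (N : ℕ) (p : ℚ[X]) (hp : p.natDegree < N) :
    ∑ j ∈ range (N + 1), (-1 : ℚ) ^ j * (N.choose j : ℚ) * p.eval (j : ℚ) = 0 := by
  have h := fwdDiff_iter_eq_sum_shift (1:ℚ) (fun x : ℚ => p.eval x) N 0
  rw [iter_delta_zero N p hp] at h
  have h2 : ∑ k ∈ range (N + 1), (-1 : ℚ) ^ (N - k) * (N.choose k : ℚ) * p.eval (k : ℚ) = 0 := by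
    have h' := h.symm
    simp only [zero_add, nsmul_eq_mul, mul_one, zsmul_eq_mul, Int.cast_mul, Int.cast_pow,
      Int.cast_neg, Int.cast_one, Int.cast_natCast] at h'
    rw [← h']
  calc ∑ j ∈ range (N + 1), (-1 : ℚ) ^ j * (N.choose j : ℚ) * p.eval (j : ℚ)
      = (-1 : ℚ) ^ N * ∑ k ∈ range (N + 1), (-1 : ℚ) ^ (N - k) * (N.choose k : ℚ) * p.eval (k : ℚ) := by
        rw [Finset.mul_sum]
        apply Finset.sum_congr rfl
        intro k hk
        have hkN : k ≤ N := by have := Finset.mem_range.mp hk; omega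
        have e1 : (-1 : ℚ) ^ k = (-1 : ℚ) ^ N * (-1 : ℚ) ^ (N - k) := by
          have e2 : (-1 : ℚ) ^ N * (-1 : ℚ) ^ (N - k) = (-1 : ℚ) ^ (N + (N - k)) := by
            rw [pow_add]
          rw [e2, show N + (N - k) = 2 * (N - k) + k by omega, pow_add, pow_mul]
          norm_num
        rw [e1]
        ring
    _ = 0 := by rw [h2, mul_zero]

lemma main_q (k : ℕ) (hk : 1 ≤ k) :
    ∑ ℓ ∈ Finset.Icc 1 (2 * k + 1),
      (-1 : ℚ) ^ ℓ / (ℓ : ℚ) * ((4 * k + 2).choose (2 * k + ℓ + 1) : ℚ) *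
        (stirlingS2 (2 * k + ℓ + 1) ℓ : ℚ) = 0 := by
  obtain ⟨n, hn⟩ : ∃ n, n = 2 * k + 1 := ⟨_, rfl⟩
  have hev0 : (HH n).eval 0 = 0 := by rw [hn]; exact HH_eval_zero (2 * k)
  obtain ⟨q, hqdef⟩ : ∃ q : ℚ[X], q = (HH n).divX := ⟨_, rfl⟩
  have hXq : X * q = HH n := by
    have h1 := Polynomial.X_mul_divX_add (HH n)
    rw [Polynomial.coeff_zero_eq_eval_zero, hev0, map_zero, add_zero] at h1
    rw [hqdef]; exact h1
  have hqdeg : q.natDegree < 2 * n := by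
    have h1 : q.natDegree = (HH n).natDegree - 1 := by
      rw [hqdef]; exact Polynomial.natDegree_divX_eq_natDegree_tsub_one
    have h2 := HH_natDegree_le n
    omega
  have hqpos : ∀ i : ℕ, ((1 + i : ℕ) : ℚ) * q.eval ((1 + i : ℕ) : ℚ)
      = (stirlingS2 (n + (1 + i)) (1 + i) : ℚ) := by
    intro i
    have h1 := HH_eval_nat n (1 + i)
    rw [← hXq] at h1
    simpa [eval_mul] using h1
  have hqneg : ∀ m : ℕ, 1 ≤ m → m ≤ n → q.eval (-(m : ℚ)) = 0 := by
    intro m h1 h2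
    have hv := HH_eval_neg n m (by omega) h2
    rw [← hXq, eval_mul, eval_X] at hv
    have hm0 : (-(m : ℚ)) ≠ 0 := by
      simp only [neg_ne_zero, Nat.cast_ne_zero]
      omega
    exact (mul_eq_zero.mp hv).resolve_left hm0
  have hq0 : q.eval 0 = 0 := by
    have hd : (derivative (HH n)).eval 0 = bernoulli' n / ((2 * k : ℚ) + 1) := by
      have h1 := HH_deriv_zero (2 * k)
      rw [hn]
      push_cast at h1 ⊢
      exact h1
    have hb : bernoulli' n = 0 := bernoulli'_eq_zero_of_odd ⟨k, by omega⟩ (by omega)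
    have e1 : q.eval 0 = (HH n).coeff 1 := by
      rw [← Polynomial.coeff_zero_eq_eval_zero, hqdef, Polynomial.coeff_divX]
    have e2 : (derivative (HH n)).eval 0 = (HH n).coeff 1 := by
      rw [← Polynomial.coeff_zero_eq_eval_zero, Polynomial.coeff_derivative]
      push_cast
      ring
    rw [e1, ← e2, hd, hb, zero_div]
  -- the alternating sum over the shifted polynomial
  have halt := alt_sum (2 * n) (q.comp (X - C (n : ℚ))) (by
    rw [Polynomial.natDegree_comp, Polynomial.natDegree_X_sub_C, mul_one]
    exact hqdeg)
  have hcomp : ∀ j : ℕ, (q.comp (X - C (n : ℚ))).eval (j : ℚ) = q.eval ((j : ℚ) - n) := by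
    intro j
    simp [Polynomial.eval_comp]
  set f : ℕ → ℚ := fun j => (-1 : ℚ) ^ j * ((2 * n).choose j : ℚ) * q.eval ((j : ℚ) - n)
    with hfdef
  have hf : ∑ j ∈ range (2 * n + 1), f j = 0 := by
    rw [← halt]
    apply Finset.sum_congr rfl
    intro j _
    rw [hfdef, hcomp j]
  have hf0 : ∀ j ∈ range (n + 1), f j = 0 := by
    intro j hj
    have hjn : j ≤ n := by
      have := Finset.mem_range.mp hj; omega
    rcases Nat.lt_or_ge j n with hlt | hge
    · have e1 : (j : ℚ) - n = -(((n - j : ℕ) : ℚ)) := by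
        have : (((n - j : ℕ)) : ℚ) = (n : ℚ) - j := by
          push_cast [Nat.cast_sub (le_of_lt hlt)]
          ring
        rw [this]; ring
      rw [hfdef]
      simp only []
      rw [e1, hqneg (n - j) (by omega) (by omega), mul_zero]
    · have hjn' : j = n := by omega
      rw [hfdef]
      simp only []
      rw [hjn']
      rw [show (n : ℚ) - n = 0 by ring, hq0, mul_zero]
  have hsplit : ∑ j ∈ range (2 * n + 1), f j
      = ∑ i ∈ range n, f (n + 1 + i) := by
    rw [Finset.range_eq_Ico]
    rw [← Finset.sum_Ico_consecutive f (Nat.zero_le (n + 1)) (by omega : n + 1 ≤ 2 * n + 1)]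
    rw [← Finset.range_eq_Ico, Finset.sum_eq_zero hf0, zero_add]
    rw [Finset.sum_Ico_eq_sum_range]
    have he : 2 * n + 1 - (n + 1) = n := by omega
    rw [he]
  have htail : ∑ i ∈ range n, f (n + 1 + i) = 0 := by
    rw [← hsplit]; exact hf
  -- now rewrite the goal
  have hIcc : ∑ ℓ ∈ Finset.Icc 1 (2 * k + 1),
      (-1 : ℚ) ^ ℓ / (ℓ : ℚ) * ((4 * k + 2).choose (2 * k + ℓ + 1) : ℚ) *
        (stirlingS2 (2 * k + ℓ + 1) ℓ : ℚ)
      = ∑ i ∈ range n,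
        (-1 : ℚ) ^ (1 + i) / ((1 + i : ℕ) : ℚ) * ((4 * k + 2).choose (2 * k + (1 + i) + 1) : ℚ) *
          (stirlingS2 (2 * k + (1 + i) + 1) (1 + i) : ℚ) := by
    rw [← Finset.Ico_add_one_right_eq_Icc, Finset.sum_Ico_eq_sum_range]
    apply Finset.sum_congr (by rw [hn]; norm_num)
    intro i _
    norm_num
  rw [hIcc]
  have hterm : ∀ i ∈ range n,
      (-1 : ℚ) ^ (1 + i) / ((1 + i : ℕ) : ℚ) * ((4 * k + 2).choose (2 * k + (1 + i) + 1) : ℚ) *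
          (stirlingS2 (2 * k + (1 + i) + 1) (1 + i) : ℚ)
        = (-1 : ℚ) ^ n * f (n + 1 + i) := by
    intro i _
    have hne : ((1 + i : ℕ) : ℚ) ≠ 0 := by
      simp only [Nat.cast_ne_zero]; omega
    have hev : q.eval (((n + 1 + i : ℕ) : ℚ) - n) = q.eval ((1 + i : ℕ) : ℚ) := by
      congr 1
      push_cast
      ring
    have hS : (stirlingS2 (2 * k + (1 + i) + 1) (1 + i) : ℚ)
        = ((1 + i : ℕ) : ℚ) * q.eval ((1 + i : ℕ) : ℚ) := by
      rw [hqpos i]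
      congr 2
      omega
    have hC : (4 * k + 2).choose (2 * k + (1 + i) + 1) = (2 * n).choose (n + 1 + i) := by
      congr 1 <;> omega
    rw [hS, hC, hfdef]
    simp only []
    rw [hev]
    have hsign : (-1 : ℚ) ^ (n + 1 + i) = (-1 : ℚ) ^ n * (-1 : ℚ) ^ (1 + i) := by
      rw [← pow_add]
      congr 1
      omega
    rw [hsign]
    have hnn : (-1 : ℚ) ^ (n * 2) = 1 := by
      rw [pow_mul, pow_right_comm]
      norm_num
    push_cast
    field_simp
    ring_nf
    rw [hnn]
    ring
  rw [Finset.sum_congr rfl hterm, ← Finset.mul_sum, htail, mul_zero]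

end Stmt6Aux

/-- combinatorial identity
`Σ_{ℓ=1}^{2k+1} ((-1)^ℓ/ℓ) C(4k+2,2k+ℓ+1) S(2k+ℓ+1,ℓ) = 0`. -/
theorem stmt6 (k : ℕ) (hk : 1 ≤ k) :
    ∑ ℓ ∈ Finset.Icc 1 (2 * k + 1),
      (-1 : ℝ) ^ ℓ / (ℓ : ℝ) * (Nat.choose (4 * k + 2) (2 * k + ℓ + 1) : ℝ) *
        (stirlingS2 (2 * k + ℓ + 1) ℓ : ℝ) = 0 := by
  exact_mod_cast Stmt6Aux.main_q k hk
end

section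
/- For all integers n ≥ 0 and r ≥ 0, the diagonal recursive relation s(n+r, r) = C(n+r, r) · Σ_{k=0}^{n} ((−r)_k/k!) · Σ_{m=0}^{k} (−1)^m·C(k,m)·s(n+m, m)/C(n+m, m) holds for the Stirling numbers of the first kind. -/
open Finset Polynomial

lemma stirlingS1_eq_zero_of_lt : ∀ n k : ℕ, n < k → stirlingS1 n k = 0
  | 0, _ + 1, _ => rfl
  | n + 1, k + 1, h => by
    rw [stirlingS1, stirlingS1_eq_zero_of_lt n k (by omega),
      stirlingS1_eq_zero_of_lt n (k+1) (by omega)]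
    ring

lemma stirlingS1_self : ∀ n : ℕ, stirlingS1 n n = 1
  | 0 => rfl
  | n + 1 => by
    rw [stirlingS1, stirlingS1_self n, stirlingS1_eq_zero_of_lt n (n+1) (by omega)]
    ring

lemma stirlingS1_zero : ∀ n : ℕ, stirlingS1 (n+1) 0 = 0
  | 0 => by rw [stirlingS1]; norm_num [stirlingS1]
  | n + 1 => by rw [stirlingS1, stirlingS1_zero n]; ring

/-- second-order Eulerian numbers -/
def E2 : ℕ → ℕ → ℤ
  | 0, 0 => 1
  | 0, _ + 1 => 0
  | n + 1, 0 => E2 n 0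
  | n + 1, k + 1 => ((k : ℤ) + 2) * E2 n (k + 1) + (2 * (n : ℤ) - k) * E2 n k

lemma E2_zero_succ (k : ℕ) : E2 0 (k + 1) = 0 := rfl
lemma E2_succ_zero (n : ℕ) : E2 (n+1) 0 = E2 n 0 := rfl
lemma E2_succ_succ (n k : ℕ) :
    E2 (n+1) (k+1) = ((k : ℤ) + 2) * E2 n (k + 1) + (2 * (n : ℤ) - k) * E2 n k := rfl

lemma E2_eq_zero : ∀ n k : ℕ, 1 ≤ n → n ≤ k → E2 n k = 0
  | 0, _, h, _ => absurd h (by omega)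
  | n + 1, 0, _, h => absurd h (by omega)
  | n + 1, k + 1, _, h => by
    rw [E2]
    rcases Nat.eq_zero_or_pos n with rfl | hn
    · simp only [E2_zero_succ]
      rcases k with _ | k'
      · norm_num [(rfl : E2 0 0 = 1)]
      · simp only [E2_zero_succ]; ring
    · rw [E2_eq_zero n (k+1) hn (by omega)]
      rcases Nat.lt_or_ge n k with hnk | hnk
      · rw [E2_eq_zero n k hn (by omega)]; ring
      · have : n = k := by omega
        subst this
        rw [E2_eq_zero n n hn le_rfl]; ring

lemma rising_eq_desc (r : ℕ) : ∀ k : ℕ,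
    risingFactorial (-(r:ℝ)) k = (-1) ^ k * (r.descFactorial k : ℝ)
  | 0 => by simp [risingFactorial]
  | k + 1 => by
    rw [risingFactorial, rising_eq_desc r k, Nat.descFactorial_succ]
    rcases Nat.lt_or_ge r k with h | h
    · rw [Nat.descFactorial_eq_zero_iff_lt.2 h]
      push_cast
      ring
    · push_cast [Nat.cast_sub h]
      ring

lemma rising_div_factorial (r k : ℕ) :
    risingFactorial (-(r:ℝ)) k / (k.factorial : ℝ) = (-1) ^ k * (r.choose k : ℝ) := by
  rw [rising_eq_desc, Nat.descFactorial_eq_factorial_mul_choose]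
  push_cast
  rw [mul_div_assoc, mul_comm ((k.factorial : ℝ)) _, mul_div_assoc,
    div_self (by exact_mod_cast k.factorial_ne_zero), mul_one]

lemma cast_descFactorial (a : ℕ) : ∀ j : ℕ,
    (a.descFactorial j : ℝ) = ∏ i ∈ range j, ((a:ℝ) - i)
  | 0 => by simp
  | j + 1 => by
    rw [Nat.descFactorial_succ, prod_range_succ, ← cast_descFactorial a j]
    rcases Nat.lt_or_ge a j with h | h
    · rw [Nat.descFactorial_eq_zero_iff_lt.2 h]
      simp
    · push_cast [Nat.cast_sub h]
      ring

lemma descFactorial_add' (a b : ℕ) : ∀ c : ℕ,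
    a.descFactorial (b + c) = a.descFactorial b * (a - b).descFactorial c
  | 0 => by simp
  | c + 1 => by
    rw [← Nat.add_assoc, Nat.descFactorial_succ, Nat.descFactorial_succ,
      descFactorial_add' a b c, Nat.sub_sub]
    ring

lemma asc_prod_eq_desc (A : ℕ) : ∀ k : ℕ,
    (∏ i ∈ range k, ((A:ℝ) + 1 + i)) = ((A + k).descFactorial k : ℝ)
  | 0 => by simp
  | k + 1 => by
    rw [prod_range_succ, asc_prod_eq_desc A k,
      (by omega : A + (k+1) = (A + k) + 1), Nat.succ_descFactorial_succ]
    push_cast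
    ring

-- termwise binomial identity T(j)
lemma Tj (n m j : ℕ) :
    ((j:ℤ) + 1) * ((n+m+1+j).choose (2*n+1)) + (2*(n:ℤ) - j) * ((n+m+2+j).choose (2*n+1))
      = ((n:ℤ)+m+1) * ((n+m+1+j).choose (2*n)) := by
  set a := n + m + 1 + j with ha
  have h1 : (n+m+2+j) = a + 1 := by omega
  rw [h1, Nat.choose_succ_succ' a (2*n)]
  have h2 : ((a.choose (2*n+1)) : ℤ) * (2*n+1) = (a.choose (2*n)) * ((a:ℤ) - 2*n) := by
    rcases Nat.lt_or_ge a (2*n) with h | h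
    · rw [Nat.choose_eq_zero_of_lt (by omega), Nat.choose_eq_zero_of_lt h]
      simp
    · have := Nat.choose_succ_right_eq a (2*n)
      have hc : ((a.choose (2*n+1) * (2*n+1) : ℕ) : ℤ) = ((a.choose (2*n) * (a - 2*n) : ℕ) : ℤ) := by
        exact_mod_cast congrArg (Nat.cast : ℕ → ℤ) this
      push_cast [Nat.cast_sub h] at hc
      exact_mod_cast hc
  push_cast
  nlinarith [h2]

lemma E2_top (n : ℕ) : E2 n (n+1) = 0 := by
  rcases n with _ | n
  · exact E2_zero_succ 0
  · exact E2_eq_zero _ _ (by omega) (by omega)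

lemma comb (n m : ℕ) :
    ∑ k ∈ range (n+2), E2 (n+1) k * (Nat.choose (n+m+1+k) (2*n+1) : ℤ)
      = ((n:ℤ)+m+1) * ∑ k ∈ range (n+1), E2 n k * (Nat.choose (n+m+1+k) (2*n) : ℤ) := by
  have hA : ∑ k ∈ range (n+2), ((k:ℤ)+1) * E2 n k * (Nat.choose (n+m+1+k) (2*n+1) : ℤ)
      = ∑ k ∈ range (n+1), ((k:ℤ)+1) * E2 n k * (Nat.choose (n+m+1+k) (2*n+1) : ℤ) := by
    rw [sum_range_succ, E2_top, mul_zero, zero_mul, add_zero]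
  rw [sum_range_succ'] at hA ⊢
  -- expand E2 (n+1) (i+1)
  have f0 : ∀ i ∈ range (n+1), E2 (n+1) (i+1) * (Nat.choose (n+m+1+(i+1)) (2*n+1) : ℤ)
      = ((i:ℤ)+2) * E2 n (i+1) * (Nat.choose (n+m+1+(i+1)) (2*n+1) : ℤ)
        + (2*(n:ℤ)-i) * E2 n i * (Nat.choose (n+m+1+(i+1)) (2*n+1) : ℤ) := by
    intro i _; rw [E2_succ_succ]; ring
  rw [sum_congr rfl f0, sum_add_distrib]
  have f1 : ∀ i ∈ range (n+1), (((i+1:ℕ):ℤ)+1) * E2 n (i+1) * (Nat.choose (n+m+1+(i+1)) (2*n+1) : ℤ)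
      = ((i:ℤ)+2) * E2 n (i+1) * (Nat.choose (n+m+1+(i+1)) (2*n+1) : ℤ) := by
    intro i _; push_cast; ring
  rw [sum_congr rfl f1] at hA
  -- use hA to replace the first summand
  have hrw : ∑ i ∈ range (n+1), ((i:ℤ)+2) * E2 n (i+1) * (Nat.choose (n+m+1+(i+1)) (2*n+1) : ℤ)
      = ∑ k ∈ range (n+1), ((k:ℤ)+1) * E2 n k * (Nat.choose (n+m+1+k) (2*n+1) : ℤ)
        - ((0:ℤ)+1) * E2 n 0 * (Nat.choose (n+m+1+0) (2*n+1) : ℤ) := by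
    rw [← hA]; push_cast; ring
  rw [hrw, E2_succ_zero]
  rw [mul_sum]
  have : ∀ k ∈ range (n+1),
      ((k:ℤ)+1) * E2 n k * (Nat.choose (n+m+1+k) (2*n+1) : ℤ)
        + (2*(n:ℤ)-k) * E2 n k * (Nat.choose (n+m+1+(k+1)) (2*n+1) : ℤ)
      = ((n:ℤ)+m+1) * (E2 n k * (Nat.choose (n+m+1+k) (2*n) : ℤ)) := by
    intro k _
    have h2 : n+m+1+(k+1) = n+m+2+k := by omega
    rw [h2]
    have := Tj n m k
    linear_combination E2 n k * this
  have hsum := sum_congr rfl this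
  rw [sum_add_distrib] at hsum
  linarith [hsum]

lemma key : ∀ n m : ℕ,
    (-1:ℤ)^n * stirlingS1 (n+m) m = ∑ k ∈ range (n+1), E2 n k * ((n+m+k).choose (2*n) : ℤ) := by
  intro n
  induction n with
  | zero =>
    intro m
    simp [stirlingS1_self]
    rfl
  | succ n ih =>
    intro m
    induction m with
    | zero =>
      rw [stirlingS1_zero, mul_zero]
      symm
      apply sum_eq_zero
      intro k hk
      rw [mem_range] at hk
      rcases Nat.lt_or_ge k (n+1) with h | h
      · rw [Nat.choose_eq_zero_of_lt (by omega), Nat.cast_zero, mul_zero]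
      · rw [E2_eq_zero (n+1) k (by omega) (by omega), zero_mul]
    | succ m ihm =>
      have hrec : stirlingS1 ((n+1)+(m+1)) (m+1)
          = stirlingS1 (n+m+1) m - ((n+m+1 : ℕ) : ℤ) * stirlingS1 (n+m+1) (m+1) := by
        rw [show (n+1)+(m+1) = (n+m+1)+1 from by omega]
        rfl
      have IH1 := ihm
      rw [show (n+1)+m = n+m+1 from by omega] at IH1
      have IH2 := ih (m+1)
      rw [show n+(m+1) = n+m+1 from by omega] at IH2
      have pascal : ∀ k ∈ range (n+2),
          E2 (n+1) k * (((n+1)+(m+1)+k).choose (2*(n+1)) : ℤ)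
            = E2 (n+1) k * ((n+m+1+k).choose (2*(n+1)) : ℤ)
              + E2 (n+1) k * ((n+m+1+k).choose (2*n+1) : ℤ) := by
        intro k _
        rw [show (n+1)+(m+1)+k = (n+m+1+k)+1 from by omega,
          show 2*(n+1) = (2*n+1)+1 from by omega, Nat.choose_succ_succ]
        push_cast
        ring
      rw [hrec, sum_congr rfl pascal, sum_add_distrib, comb n m]
      push_cast at IH1 IH2 ⊢
      linear_combination IH1 + ((n:ℤ)+m+1) * IH2

lemma fwdDiff_iter_zero_fun (j : ℕ) :
    (fwdDiff (1:ℕ))^[j] (fun _ : ℕ => (0:ℝ)) = fun _ => 0 :=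
  Function.iterate_fixed (by ext x; simp [fwdDiff]) j

lemma fwdDiff_poly_eval (P : Polynomial ℝ) :
    fwdDiff (1:ℕ) (fun m : ℕ => P.eval (m:ℝ)) = fun m : ℕ => (P.comp (X + C 1) - P).eval (m:ℝ) := by
  ext m
  simp only [fwdDiff, eval_sub, eval_comp, eval_add, eval_X, eval_C]
  push_cast
  ring

lemma natDegree_shift_sub (P : Polynomial ℝ) (hP : P.natDegree ≠ 0) :
    (P.comp (X + C 1) - P).natDegree < P.natDegree := by
  have hmonic : (X + C (1:ℝ)).Monic := monic_X_add_C 1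
  have hdeg : (P.comp (X + C 1)).natDegree = P.natDegree := by
    rw [natDegree_comp, natDegree_X_add_C, mul_one]
  have hP0 : P ≠ 0 := fun h => hP (by simp [h])
  have hlead : (P.comp (X + C 1)).leadingCoeff = P.leadingCoeff := by
    rw [leadingCoeff_comp (by rw [natDegree_X_add_C]; exact one_ne_zero),
      hmonic.leadingCoeff, one_pow, mul_one]
  have hcomp0 : P.comp (X + C 1) ≠ 0 := by
    intro h
    apply hP0
    rw [← leadingCoeff_eq_zero] at *
    rw [← hlead, h]
  have hdegree : (P.comp (X + C 1)).degree = P.degree := by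
    rw [degree_eq_natDegree hcomp0, degree_eq_natDegree hP0, hdeg]
  have hlt := degree_sub_lt hdegree hcomp0 hlead
  rcases eq_or_ne (P.comp (X + C 1) - P) 0 with h0 | h0
  · rw [h0, natDegree_zero]; omega
  · have := degree_eq_natDegree h0
    rw [this, degree_eq_natDegree hcomp0, hdeg] at hlt
    exact_mod_cast hlt

lemma fwdDiff_iter_poly_eval : ∀ (d : ℕ) (P : Polynomial ℝ), P.natDegree ≤ d →
    (fwdDiff (1:ℕ))^[d+1] (fun m : ℕ => P.eval (m:ℝ)) = fun _ => 0 := by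
  intro d
  induction d with
  | zero =>
    intro P hP
    obtain ⟨a, rfl⟩ := Polynomial.natDegree_eq_zero.mp (Nat.le_zero.mp hP)
    ext m
    simp [fwdDiff]
  | succ d ihd =>
    intro P hP
    rw [Function.iterate_succ_apply, fwdDiff_poly_eval]
    rcases eq_or_ne P.natDegree 0 with h0 | h0
    · obtain ⟨a, rfl⟩ := Polynomial.natDegree_eq_zero.mp h0
      have : (C a).comp (X + C 1) - C a = 0 := by simp
      rw [this]
      simpa using fwdDiff_iter_zero_fun (d+1+1-1)
    · exact ihd _ (by have := natDegree_shift_sub P h0; omega)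

-- per-term real identity
lemma choose_term (n m k : ℕ) (hk : k ≤ n) :
    ((n+m+k).choose (2*n) : ℝ)
      = ((n+m).choose m : ℝ) * ((n.factorial : ℝ) / ((2*n).factorial : ℝ))
        * (((n+m+k).descFactorial k : ℝ) * ((m.descFactorial (n-k)) : ℝ)) := by
  have hsplit : 2*n = k + (n + (n-k)) := by omega
  have h1 : (n+m+k).descFactorial (2*n)
      = (n+m+k).descFactorial k * ((n+m).descFactorial n * (m.descFactorial (n-k))) := by
    rw [hsplit, descFactorial_add', show n+m+k-k = n+m from by omega, descFactorial_add',
      show n+m-n = m from by omega]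
  have h2 : (n+m).descFactorial n = n.factorial * (n+m).choose m := by
    rw [Nat.descFactorial_eq_factorial_mul_choose]
    congr 1
    rw [← Nat.choose_symm (by omega : m ≤ n+m), show n+m-m = n from by omega]
  have h3 : (n+m+k).descFactorial (2*n) = (2*n).factorial * (n+m+k).choose (2*n) :=
    Nat.descFactorial_eq_factorial_mul_choose _ _
  have h4 : ((2*n).factorial : ℝ) ≠ 0 := by exact_mod_cast (2*n).factorial_ne_zero
  rw [h2, h3] at h1
  have h1' : ((2*n).factorial : ℝ) * ((n+m+k).choose (2*n) : ℝ)
      = ((n+m+k).descFactorial k : ℝ) * ((n.factorial : ℝ) * ((n+m).choose m : ℝ)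
          * (m.descFactorial (n-k) : ℝ)) := by exact_mod_cast h1
  field_simp
  linarith [h1']

-- the representation
lemma g_poly (n : ℕ) : ∃ P : Polynomial ℝ, P.natDegree ≤ n ∧
    ∀ m : ℕ, (stirlingS1 (n+m) m : ℝ) / ((n+m).choose m : ℝ) = P.eval (m:ℝ) := by
  refine ⟨C ((-1)^n * (n.factorial : ℝ) / ((2*n).factorial : ℝ)) *
    ∑ k ∈ range (n+1), C ((E2 n k : ℤ) : ℝ) *
      ((∏ i ∈ range k, (X + C ((n:ℝ)+1+i))) * ∏ i ∈ range (n-k), (X - C (i:ℝ))), ?_, ?_⟩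
  · apply le_trans (natDegree_mul_le)
    rw [natDegree_C, zero_add]
    apply natDegree_sum_le_of_forall_le
    intro k hk
    rw [mem_range] at hk
    apply le_trans (natDegree_mul_le)
    rw [natDegree_C, zero_add]
    apply le_trans (natDegree_mul_le)
    have d1 : ((∏ i ∈ range k, (X + C ((n:ℝ)+1+i)))).natDegree ≤ k := by
      apply le_trans (natDegree_prod_le _ _)
      apply le_trans (sum_le_card_nsmul _ _ 1 ?_) (by simp)
      intro i _
      exact le_of_eq (natDegree_X_add_C _)
    have d2 : ((∏ i ∈ range (n-k), (X - C ((i:ℕ):ℝ)))).natDegree ≤ n - k := by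
      apply le_trans (natDegree_prod_le _ _)
      apply le_trans (sum_le_card_nsmul _ _ 1 ?_) (by simp)
      intro i _
      exact le_of_eq (natDegree_X_sub_C _)
    omega
  · intro m
    have hC : (((n+m).choose m : ℕ) : ℝ) ≠ 0 := by
      exact_mod_cast (Nat.choose_pos (by omega : m ≤ n+m)).ne'
    rw [div_eq_iff hC]
    have hkey : (stirlingS1 (n+m) m : ℝ)
        = (-1:ℝ)^n * ∑ k ∈ range (n+1), ((E2 n k : ℤ) : ℝ) * ((n+m+k).choose (2*n) : ℝ) := by
      have h := key n m
      have h' : ((-1:ℤ)^n * stirlingS1 (n+m) m : ℤ) = ((∑ k ∈ range (n+1),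
          E2 n k * ((n+m+k).choose (2*n) : ℤ)) : ℤ) := h
      have := congrArg (fun z : ℤ => (z : ℝ)) h'
      push_cast at this ⊢
      have hsq : (-1:ℝ)^n * (-1)^n = 1 := by
        rw [← pow_add, ← two_mul, pow_mul]
        norm_num
      linear_combination ((-1:ℝ)^n) * this - ((stirlingS1 (n+m) m : ℤ) : ℝ) * hsq
    rw [hkey]
    rw [eval_mul, eval_C, eval_finset_sum]
    rw [mul_sum, mul_sum, sum_mul]
    apply sum_congr rfl
    intro k hk
    rw [mem_range] at hk
    have hterm := choose_term n m k (by omega)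
    rw [hterm]
    rw [eval_mul, eval_C, eval_mul, eval_prod, eval_prod]
    have e1 : (∏ i ∈ range k, eval (m:ℝ) (X + C ((n:ℝ)+1+i)))
        = ((n+m+k).descFactorial k : ℝ) := by
      rw [← asc_prod_eq_desc (n+m) k]
      · apply prod_congr rfl
        intro i _
        rw [eval_add, eval_X, eval_C]
        push_cast
        ring
    have e2 : (∏ i ∈ range (n-k), eval (m:ℝ) (X - C ((i:ℕ):ℝ)))
        = ((m.descFactorial (n-k)) : ℝ) := by
      rw [cast_descFactorial]
      apply prod_congr rfl
      intro i _
      rw [eval_sub, eval_X, eval_C]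
    rw [e1, e2]
    ring

/-- diagonal recursive relation
`s(n+r,r) = C(n+r,r) Σ_{k=0}^{n} ((-r)_k/k!) Σ_{m=0}^{k} (-1)^m C(k,m) s(n+m,m)/C(n+m,m)`. -/
theorem stmt9 (n r : ℕ) :
    (stirlingS1 (n + r) r : ℝ) =
      (Nat.choose (n + r) r : ℝ) *
        ∑ k ∈ Finset.range (n + 1),
          risingFactorial (-(r : ℝ)) k / (Nat.factorial k : ℝ) *
            ∑ m ∈ Finset.range (k + 1),
              (-1 : ℝ) ^ m * (Nat.choose k m : ℝ) * (stirlingS1 (n + m) m : ℝ) /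
                (Nat.choose (n + m) m : ℝ) := by
  set g : ℕ → ℝ := fun m => (stirlingS1 (n+m) m : ℝ) / ((n+m).choose m : ℝ) with hg
  -- inner sums are signed forward differences
  have hinner : ∀ k : ℕ, ∑ m ∈ Finset.range (k + 1),
      (-1 : ℝ) ^ m * (Nat.choose k m : ℝ) * (stirlingS1 (n + m) m : ℝ) /
        (Nat.choose (n + m) m : ℝ)
      = (-1:ℝ)^k * (fwdDiff (1:ℕ))^[k] g 0 := by
    intro k
    have h := fwdDiff_iter_eq_sum_shift (1:ℕ) g k 0
    rw [h, mul_sum]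
    apply sum_congr rfl
    intro m hm
    rw [mem_range] at hm
    have h0 : (0 + m • (1:ℕ)) = m := by simp
    rw [h0, zsmul_eq_mul]
    have hsign : (-1:ℝ)^k * (-1:ℝ)^(k-m) = (-1)^m := by
      rw [← pow_add, show k + (k-m) = 2*(k-m) + m from by omega, pow_add, pow_mul]
      norm_num
    show (-1 : ℝ) ^ m * (Nat.choose k m : ℝ) * (stirlingS1 (n + m) m : ℝ) /
        (Nat.choose (n + m) m : ℝ)
      = (-1:ℝ)^k * ((((-1:ℤ)^(k-m) * (k.choose m : ℤ) : ℤ) : ℝ) *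
          ((stirlingS1 (n+m) m : ℝ) / ((n+m).choose m : ℝ)))
    push_cast
    linear_combination (-((k.choose m : ℝ) * (stirlingS1 (n+m) m : ℝ) /
      ((n+m).choose m : ℝ))) * hsign
  obtain ⟨P, hPdeg, hPeval⟩ := g_poly n
  have hgP : g = fun m : ℕ => P.eval (m:ℝ) := funext hPeval
  have hvan : ∀ k : ℕ, n+1 ≤ k → (fwdDiff (1:ℕ))^[k] g 0 = 0 := by
    intro k hk
    have h1 : (fwdDiff (1:ℕ))^[n+1] g = fun _ => 0 := by
      rw [hgP]; exact fwdDiff_iter_poly_eval n P hPdeg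
    have h2 : (fwdDiff (1:ℕ))^[k] g
        = (fwdDiff (1:ℕ))^[k-(n+1)] ((fwdDiff (1:ℕ))^[n+1] g) := by
      rw [← Function.iterate_add_apply, show k-(n+1)+(n+1) = k from by omega]
    rw [h2, h1, fwdDiff_iter_zero_fun]
  have hsum : ∑ k ∈ Finset.range (n + 1),
      risingFactorial (-(r : ℝ)) k / (Nat.factorial k : ℝ) *
        ∑ m ∈ Finset.range (k + 1),
          (-1 : ℝ) ^ m * (Nat.choose k m : ℝ) * (stirlingS1 (n + m) m : ℝ) /
            (Nat.choose (n + m) m : ℝ)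
      = ∑ k ∈ range (n+1), (r.choose k : ℝ) * ((fwdDiff (1:ℕ))^[k] g 0) := by
    apply sum_congr rfl
    intro k _
    rw [hinner k, rising_div_factorial r k]
    have hsq : (-1:ℝ)^k * (-1:ℝ)^k = 1 := by
      rw [← pow_add, ← two_mul, pow_mul]; norm_num
    linear_combination ((r.choose k : ℝ) * ((fwdDiff (1:ℕ))^[k] g 0)) * hsq
  have hext1 : ∑ k ∈ range (n+1), (r.choose k : ℝ) * ((fwdDiff (1:ℕ))^[k] g 0)
      = ∑ k ∈ range (n+r+1), (r.choose k : ℝ) * ((fwdDiff (1:ℕ))^[k] g 0) := by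
    apply sum_subset (range_subset_range.2 (by omega))
    intro k hk hnk
    rw [mem_range] at hk hnk
    rw [hvan k (by omega), mul_zero]
  have hext2 : ∑ k ∈ range (r+1), (r.choose k : ℝ) * ((fwdDiff (1:ℕ))^[k] g 0)
      = ∑ k ∈ range (n+r+1), (r.choose k : ℝ) * ((fwdDiff (1:ℕ))^[k] g 0) := by
    apply sum_subset (range_subset_range.2 (by omega))
    intro k hk hnk
    rw [mem_range] at hk hnk
    rw [Nat.choose_eq_zero_of_lt (by omega), Nat.cast_zero, zero_mul]
  have hnewton := shift_eq_sum_fwdDiff_iter (1:ℕ) g r 0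
  have h01 : (0 + r • (1:ℕ)) = r := by simp
  rw [h01] at hnewton
  have hnewton' : g r = ∑ k ∈ range (r+1), (r.choose k : ℝ) * ((fwdDiff (1:ℕ))^[k] g 0) := by
    rw [hnewton]
    apply sum_congr rfl
    intro k _
    rw [nsmul_eq_mul]
  have hC : ((n+r).choose r : ℝ) ≠ 0 := by
    exact_mod_cast (Nat.choose_pos (by omega : r ≤ n+r)).ne'
  rw [hsum, hext1, ← hext2, ← hnewton']
  show (stirlingS1 (n + r) r : ℝ) = ((n+r).choose r : ℝ) *
    ((stirlingS1 (n+r) r : ℝ) / ((n+r).choose r : ℝ))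
  rw [mul_comm, div_mul_cancel₀ _ hC]
end

section
/- For every integer n ≥ 0, the Bernoulli numbers of the second kind satisfy the closed-form formula b_n = (1/n!) · Σ_{m=0}^{n} (−1)^m·C(n+1, m+1)·s(n+m, m)/C(n+m, m). -/
open PowerSeries Finset

noncomputable def Lser : PowerSeries ℝ := PowerSeries.mk fun k => (-1) ^ k / (k + 1)

lemma constL : constantCoeff Lser = 1 := by
  rw [← coeff_zero_eq_constantCoeff_apply, Lser, coeff_mk]
  norm_num

noncomputable def Kser : PowerSeries ℝ := PowerSeries.X * Lser

lemma coeff_K_succ (n : ℕ) : coeff (n + 1) Kser = (-1) ^ n / (n + 1) := by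
  rw [Kser, coeff_succ_X_mul, Lser, coeff_mk]

lemma constK : constantCoeff Kser = 0 := by
  simp [Kser]

lemma deriv_K : d⁄dX ℝ Kser = PowerSeries.mk fun n => (-1) ^ n := by
  ext n
  rw [coeff_derivative, coeff_K_succ, coeff_mk]
  have : ((n : ℝ) + 1) ≠ 0 := by positivity
  field_simp

lemma onePlusX_mul_derivK : ((1 : PowerSeries ℝ) + X) * d⁄dX ℝ Kser = 1 := by
  ext n
  rw [deriv_K, add_mul, one_mul, map_add]
  cases n with
  | zero => simp [coeff_zero_eq_constantCoeff_apply]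
  | succ k => simp [coeff_succ_X_mul, coeff_mk, coeff_one, pow_succ]

lemma key_s10 (m : ℕ) :
    ((1 : PowerSeries ℝ) + X) * d⁄dX ℝ (Kser ^ (m + 1)) = (m + 1 : ℕ) • Kser ^ m := by
  rw [Derivation.leibniz_pow]
  simp only [Nat.add_sub_cancel, smul_eq_mul]
  rw [mul_smul_comm]
  congr 1
  rw [show Kser ^ m * d⁄dX ℝ Kser = Kser ^ m • (d⁄dX ℝ Kser) from rfl]
  rw [smul_eq_mul, ← mul_assoc, mul_comm ((1 : PowerSeries ℝ) + X) (Kser ^ m), mul_assoc,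
    onePlusX_mul_derivK, mul_one]

lemma rec1 (n m : ℕ) :
    ((n : ℝ) + 1) * coeff (n + 1) (Kser ^ (m + 1)) + (n : ℝ) * coeff n (Kser ^ (m + 1))
    = ((m : ℝ) + 1) * coeff n (Kser ^ m) := by
  have h := congrArg (coeff n) (key_s10 m)
  rw [add_mul, one_mul, map_add, coeff_derivative] at h
  rw [map_nsmul] at h
  cases n with
  | zero =>
      rw [show ((coeff 0) (X * d⁄dX ℝ (Kser ^ (m + 1)))) = 0 by
        rw [coeff_zero_eq_constantCoeff_apply]; simp] at h
      push_cast at h ⊢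
      rw [nsmul_eq_mul] at h
      push_cast at h
      linarith [h]
  | succ k =>
      rw [coeff_succ_X_mul, coeff_derivative] at h
      rw [nsmul_eq_mul] at h
      push_cast at h ⊢
      linarith [h]

lemma stirling_zero : ∀ n : ℕ, stirlingS1 (n + 1) 0 = 0 := by
  intro n
  induction n with
  | zero => simp [stirlingS1]
  | succ k ih => rw [stirlingS1, ih, mul_zero]

lemma coeffK : ∀ n m : ℕ, coeff n (Kser ^ m) * (Nat.factorial n : ℝ)
    = (Nat.factorial m : ℝ) * (stirlingS1 n m : ℝ) := by
  intro n
  induction n with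
  | zero =>
      intro m
      cases m with
      | zero => simp [stirlingS1, coeff_zero_eq_constantCoeff_apply]
      | succ k =>
          rw [coeff_zero_eq_constantCoeff_apply, map_pow, constK]
          simp [stirlingS1]
  | succ n ih =>
      intro m
      cases m with
      | zero =>
          rw [pow_zero, stirling_zero]
          simp [coeff_one]
      | succ m =>
          have h := rec1 n m
          have ihm := ih m
          have ihm1 := ih (m + 1)
          have hst : (stirlingS1 (n + 1) (m + 1) : ℝ)
              = (stirlingS1 n m : ℝ) - (n : ℝ) * (stirlingS1 n (m + 1) : ℝ) := by
            rw [stirlingS1]; push_cast; ring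
          rw [Nat.factorial_succ n, Nat.factorial_succ m, hst]
          push_cast
          push_cast [Nat.factorial_succ m] at ihm1
          nlinarith [h, ihm, ihm1]

lemma coeffL (n m : ℕ) : coeff n (Lser ^ m) * (Nat.factorial (n + m) : ℝ)
    = (Nat.factorial m : ℝ) * (stirlingS1 (n + m) m : ℝ) := by
  have hK : Kser ^ m = X ^ m * Lser ^ m := by rw [Kser, mul_pow]
  have h := coeffK (n + m) m
  rw [hK, coeff_X_pow_mul] at h
  exact h

lemma geom (n : ℕ) :
    Lser * (∑ m ∈ range (n + 1),
        PowerSeries.C (R := ℝ) ((-1) ^ m * ((n + 1).choose (m + 1) : ℝ)) * Lser ^ m)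
    = 1 - (1 - Lser) ^ (n + 1) := by
  have hbin : (1 - Lser) ^ (n + 1)
      = ∑ k ∈ range (n + 2), (-Lser) ^ k * 1 ^ (n + 1 - k) * (((n + 1).choose k : ℕ) : ℝ⟦X⟧) := by
    rw [sub_eq_add_neg, add_comm]
    exact add_pow (-Lser) 1 (n + 1)
  have hbin2 : (1 - Lser) ^ (n + 1)
      = (∑ i ∈ range (n + 1), (-Lser) ^ (i + 1) * (((n + 1).choose (i + 1) : ℕ) : ℝ⟦X⟧)) + 1 := by
    rw [hbin, Finset.sum_range_succ']
    simp only [pow_zero, one_mul, one_pow, mul_one, Nat.choose_zero_right, Nat.cast_one]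
  rw [hbin2, sub_add_eq_sub_sub, sub_right_comm, sub_self, zero_sub, mul_sum, ← Finset.sum_neg_distrib]
  refine Finset.sum_congr rfl fun m _ => ?_
  have hc : (((n + 1).choose (m + 1) : ℕ) : ℝ⟦X⟧)
      = PowerSeries.C (R := ℝ) (((n + 1).choose (m + 1) : ℕ) : ℝ) := by
    rw [← map_natCast (PowerSeries.C (R := ℝ))]
  rw [hc, map_mul]
  have h1 : PowerSeries.C (R := ℝ) ((-1 : ℝ) ^ m) = (-1 : ℝ⟦X⟧) ^ m := by
    rw [map_pow, map_neg, map_one]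
  rw [h1, neg_pow]
  ring

lemma hLinvmul : Lser⁻¹ * Lser = 1 :=
  PowerSeries.inv_mul_cancel Lser (by rw [constL]; exact one_ne_zero)

lemma coeff_Linv (n : ℕ) : coeff n Lser⁻¹
    = ∑ m ∈ range (n + 1),
        ((-1) ^ m * ((n + 1).choose (m + 1) : ℝ)) * coeff n (Lser ^ m) := by
  have hS : (∑ m ∈ range (n + 1),
        PowerSeries.C (R := ℝ) ((-1) ^ m * ((n + 1).choose (m + 1) : ℝ)) * Lser ^ m)
      = Lser⁻¹ - Lser⁻¹ * (1 - Lser) ^ (n + 1) := by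
    have h2 := congrArg (fun f => Lser⁻¹ * f) (geom n)
    rw [← mul_assoc, hLinvmul, one_mul] at h2
    rw [h2, mul_sub, mul_one]
  have hvan : coeff n (Lser⁻¹ * (1 - Lser) ^ (n + 1)) = 0 := by
    have hX : (X : ℝ⟦X⟧) ∣ (1 - Lser) :=
      X_dvd_iff.2 (by rw [map_sub, map_one, constL, sub_self])
    have hdvd : (X : ℝ⟦X⟧) ^ (n + 1) ∣ Lser⁻¹ * (1 - Lser) ^ (n + 1) :=
      Dvd.dvd.mul_left (pow_dvd_pow_of_dvd hX (n + 1)) _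
    exact X_pow_dvd_iff.1 hdvd n (Nat.lt_succ_self n)
  have := congrArg (coeff n) hS
  rw [map_sub, hvan, sub_zero, map_sum] at this
  rw [← this]
  exact Finset.sum_congr rfl fun m _ => coeff_C_mul n (Lser ^ m) _

lemma logser (x : ℝ) (hx0 : 0 < x) (hx1 : x < 1) :
    HasSum (fun k : ℕ => ((-1) ^ k / (k + 1)) * x ^ k) (Real.log (1 + x) / x) := by
  have habs : |(-x)| < 1 := by rw [abs_neg, abs_of_pos hx0]; exact hx1
  have h := Real.hasSum_pow_div_log_of_abs_lt_one habs
  have h2 := h.mul_right (-x⁻¹)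
  have hx : x ≠ 0 := ne_of_gt hx0
  have hterm : ∀ n : ℕ, (-x) ^ (n + 1) / ((n : ℝ) + 1) * (-x⁻¹)
      = ((-1) ^ n / ((n : ℝ) + 1)) * x ^ n := by
    intro n
    have hn : ((n : ℝ) + 1) ≠ 0 := by positivity
    rw [neg_pow, pow_succ]
    field_simp
    ring
  have hval : -Real.log (1 - -x) * -x⁻¹ = Real.log (1 + x) / x := by
    rw [sub_neg_eq_add, neg_mul_neg, ← div_eq_mul_inv]
  simp only [hterm, hval] at h2
  exact h2

lemma coeff_zero_of_hasSum_zero (c : ℕ → ℝ)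
    (h : ∀ x : ℝ, 0 < x → x < 1 → HasSum (fun n => c n * x ^ n) 0) : c 0 = 0 := by
  have h2 := h (1/2) (by norm_num) (by norm_num)
  have htend : Filter.Tendsto (fun n => |c n| * (1/2 : ℝ) ^ n) Filter.atTop (nhds 0) := by
    have h3 := h2.summable.tendsto_atTop_zero.abs
    simpa [abs_mul, abs_pow, abs_inv, abs_two] using h3
  obtain ⟨M, hM⟩ := htend.bddAbove_range
  have hM' : ∀ n, |c n| * (1/2 : ℝ) ^ n ≤ M := fun n => hM ⟨n, rfl⟩
  have hM0 : 0 ≤ M := le_trans (by positivity) (hM' 0)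
  have key_s10 : ∀ x : ℝ, 0 < x → x ≤ 1/4 → |c 0| ≤ 4 * M * x := by
    intro x hx0 hx4
    have hx1 : x < 1 := lt_of_le_of_lt hx4 (by norm_num)
    have hs := h x hx0 hx1
    have hshift : HasSum (fun n => c (n + 1) * x ^ (n + 1)) (-(c 0)) := by
      have h4 := (hasSum_nat_add_iff' 1).2 hs
      simpa using h4
    have h2x0 : (0 : ℝ) ≤ 2 * x := by positivity
    have h2x1 : 2 * x < 1 := by linarith
    have hgeo := summable_geometric_of_lt_one h2x0 h2x1
    have hsum_g : Summable (fun n : ℕ => (M * (2 * x)) * (2 * x) ^ n) := hgeo.mul_left _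
    have hbound : ∀ n : ℕ, |c (n + 1) * x ^ (n + 1)| ≤ (M * (2 * x)) * (2 * x) ^ n := by
      intro n
      have h1 : |c (n + 1)| * (1/2 : ℝ) ^ (n + 1) ≤ M := hM' (n + 1)
      have hxe : x ^ (n + 1) = (1/2 : ℝ) ^ (n + 1) * (2 * x) ^ (n + 1) := by
        rw [← mul_pow]
        congr 1
        ring
      rw [abs_mul, abs_pow, abs_of_pos hx0, hxe, ← mul_assoc]
      have hr : (M * (2 * x)) * (2 * x) ^ n = M * (2 * x) ^ (n + 1) := by
        rw [pow_succ']; ring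
      rw [hr]
      exact mul_le_mul_of_nonneg_right h1 (pow_nonneg h2x0 _)
    have habs_sum : Summable fun n : ℕ => |c (n + 1) * x ^ (n + 1)| :=
      Summable.of_nonneg_of_le (fun n => abs_nonneg _) hbound hsum_g
    have h6 : |c 0| ≤ ∑' n : ℕ, (M * (2 * x)) * (2 * x) ^ n := by
      have h7 : |c 0| = |∑' n : ℕ, c (n + 1) * x ^ (n + 1)| := by
        rw [hshift.tsum_eq, abs_neg]
      rw [h7]
      have hnorm := norm_tsum_le_tsum_norm (f := fun n : ℕ => c (n + 1) * x ^ (n + 1))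
        (by simpa only [Real.norm_eq_abs] using habs_sum)
      simp only [Real.norm_eq_abs] at hnorm
      exact le_trans hnorm (Summable.tsum_le_tsum hbound habs_sum hsum_g)
    have h8 : ∑' n : ℕ, (M * (2 * x)) * (2 * x) ^ n = (M * (2 * x)) * (1 - 2 * x)⁻¹ := by
      rw [tsum_mul_left, tsum_geometric_of_lt_one h2x0 h2x1]
    have h9 : (1 - 2 * x)⁻¹ ≤ 2 := by
      rw [inv_le_comm₀ (by linarith) (by norm_num)]
      linarith
    calc |c 0| ≤ (M * (2 * x)) * (1 - 2 * x)⁻¹ := by rw [← h8]; exact h6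
      _ ≤ (M * (2 * x)) * 2 := by
          exact mul_le_mul_of_nonneg_left h9 (by positivity)
      _ = 4 * M * x := by ring
  by_contra h0
  have hpos : 0 < |c 0| := abs_pos.2 h0
  have hx0 : 0 < min (1/4 : ℝ) (|c 0| / (8 * (M + 1))) := lt_min (by norm_num) (by positivity)
  have hx4 : min (1/4 : ℝ) (|c 0| / (8 * (M + 1))) ≤ 1/4 := min_le_left _ _
  have hkey := key_s10 _ hx0 hx4
  have hxle : min (1/4 : ℝ) (|c 0| / (8 * (M + 1))) ≤ |c 0| / (8 * (M + 1)) := min_le_right _ _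
  have hfin : 4 * M * min (1/4 : ℝ) (|c 0| / (8 * (M + 1))) ≤ |c 0| / 2 := by
    have h10 : 4 * (M + 1) * (|c 0| / (8 * (M + 1))) = |c 0| / 2 := by
      field_simp
      ring
    nlinarith [hx0.le, hxle, hM0]
  linarith

lemma coeff_all_zero (c : ℕ → ℝ)
    (h : ∀ x : ℝ, 0 < x → x < 1 → HasSum (fun n => c n * x ^ n) 0) : ∀ n, c n = 0 := by
  intro n
  induction n generalizing c with
  | zero => exact coeff_zero_of_hasSum_zero c h
  | succ k ih =>
      refine ih (fun j => c (j + 1)) ?_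
      intro x hx0 hx1
      have hs := h x hx0 hx1
      have h0 := coeff_zero_of_hasSum_zero c h
      have hshift : HasSum (fun n => c (n + 1) * x ^ (n + 1)) 0 := by
        have h4 := (hasSum_nat_add_iff' 1).2 hs
        simpa [h0] using h4
      have h5 := hshift.mul_right x⁻¹
      rw [zero_mul] at h5
      have hx : x ≠ 0 := ne_of_gt hx0
      have hterm : ∀ n : ℕ, c (n + 1) * x ^ (n + 1) * x⁻¹ = c (n + 1) * x ^ n := by
        intro n
        rw [pow_succ]
        field_simp
      simpa only [hterm] using h5

lemma cauchy (b : ℕ → ℝ)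
    (hb : ∀ x : ℝ, 0 < |x| → |x| < 1 →
      HasSum (fun n : ℕ => b n * x ^ n) (x / Real.log (1 + x)))
    (x : ℝ) (hx0 : 0 < x) (hx1 : x < 1) :
    HasSum (fun n : ℕ =>
      (∑ k ∈ range (n + 1), b k * ((-1) ^ (n - k) / (((n - k : ℕ) : ℝ) + 1))) * x ^ n) 1 := by
  have hax : 0 < |x| := by rw [abs_of_pos hx0]; exact hx0
  have hax1 : |x| < 1 := by rw [abs_of_pos hx0]; exact hx1
  have hf := hb x hax hax1
  have hg := logser x hx0 hx1
  have h := hasSum_sum_range_mul_of_summable_norm hf.summable.norm hg.summable.norm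
  rw [hf.tsum_eq, hg.tsum_eq] at h
  have hlog : Real.log (1 + x) ≠ 0 := ne_of_gt (Real.log_pos (by linarith))
  have hx : x ≠ 0 := ne_of_gt hx0
  have hval : x / Real.log (1 + x) * (Real.log (1 + x) / x) = 1 := by field_simp
  rw [hval] at h
  have hterm : ∀ n : ℕ, (∑ k ∈ range (n + 1),
        (b k * x ^ k) * (((-1) ^ (n - k) / (((n - k : ℕ) : ℝ) + 1)) * x ^ (n - k)))
      = (∑ k ∈ range (n + 1), b k * ((-1) ^ (n - k) / (((n - k : ℕ) : ℝ) + 1))) * x ^ n := by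
    intro n
    rw [Finset.sum_mul]
    refine Finset.sum_congr rfl fun k hk => ?_
    have hk' : k ≤ n := Nat.lt_succ_iff.1 (mem_range.1 hk)
    have hpow : x ^ n = x ^ k * x ^ (n - k) := by
      rw [← pow_add, Nat.add_sub_cancel' hk']
    rw [hpow]
    ring
  simpa only [hterm] using h

lemma prod_eq_one (b : ℕ → ℝ)
    (hb : ∀ x : ℝ, 0 < |x| → |x| < 1 →
      HasSum (fun n : ℕ => b n * x ^ n) (x / Real.log (1 + x))) :
    PowerSeries.mk b * Lser = 1 := by
  set cc : ℕ → ℝ := fun n => ∑ k ∈ range (n + 1), b k * ((-1) ^ (n - k) / (((n - k : ℕ) : ℝ) + 1))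
    with hcc
  have hdelta : ∀ n, cc n = if n = 0 then 1 else 0 := by
    have hz := coeff_all_zero (fun n => cc n - if n = 0 then 1 else 0) ?_
    · intro n
      have := hz n
      linarith [this]
    · intro x hx0 hx1
      have h1 := cauchy b hb x hx0 hx1
      have h2 : HasSum (fun n : ℕ => (if n = 0 then (1 : ℝ) else 0) * x ^ n) 1 := by
        rw [show (fun n : ℕ => (if n = 0 then (1 : ℝ) else 0) * x ^ n)
            = fun n : ℕ => if n = 0 then (1 : ℝ) else 0 from funext fun n => by
          cases n <;> simp]
        exact hasSum_ite_eq 0 1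
      have h3 := h1.sub h2
      rw [sub_self] at h3
      simpa only [sub_mul] using h3
  ext n
  rw [PowerSeries.coeff_mul, PowerSeries.coeff_one,
    Finset.Nat.sum_antidiagonal_eq_sum_range_succ_mk]
  have : ∑ k ∈ range (n + 1), (coeff k) (PowerSeries.mk b) * (coeff (n - k)) Lser
      = cc n := by
    refine Finset.sum_congr rfl fun k _ => ?_
    rw [coeff_mk, Lser, coeff_mk]
  rw [this, hdelta n]

/-- if `b_n` are the Bernoulli numbers of the second kind, generated by
`x/ln(1+x) = Σ b_n x^n` for `|x| < 1`, then
`b_n = (1/n!) Σ_{m=0}^{n} (-1)^m C(n+1,m+1) s(n+m,m)/C(n+m,m)`. -/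
theorem stmt10 (b : ℕ → ℝ)
    (hb : ∀ x : ℝ, 0 < |x| → |x| < 1 →
      HasSum (fun n : ℕ => b n * x ^ n) (x / Real.log (1 + x)))
    (n : ℕ) :
    b n = 1 / (Nat.factorial n : ℝ) *
      ∑ m ∈ Finset.range (n + 1),
        (-1 : ℝ) ^ m * (Nat.choose (n + 1) (m + 1) : ℝ) * (stirlingS1 (n + m) m : ℝ) /
          (Nat.choose (n + m) m : ℝ) := by
  have hProd := prod_eq_one b hb
  have hbL : PowerSeries.mk b = Lser⁻¹ := by
    have h1 : PowerSeries.mk b = PowerSeries.mk b * (Lser * Lser⁻¹) := by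
      rw [PowerSeries.mul_inv_cancel _ (by rw [constL]; exact one_ne_zero), mul_one]
    rw [h1, ← mul_assoc, hProd, one_mul]
  have hbn : b n = coeff n Lser⁻¹ := by rw [← hbL, coeff_mk]
  rw [hbn, coeff_Linv, Finset.mul_sum]
  refine Finset.sum_congr rfl fun m _ => ?_
  have hfac : ((n + m).factorial : ℝ) ≠ 0 := Nat.cast_ne_zero.2 (Nat.factorial_ne_zero _)
  have hLm : coeff n (Lser ^ m)
      = (Nat.factorial m : ℝ) * (stirlingS1 (n + m) m : ℝ) / ((n + m).factorial : ℝ) := by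
    rw [eq_div_iff hfac]
    exact coeffL n m
  rw [hLm]
  have hc : ((n + m).choose m : ℝ) * (Nat.factorial m : ℝ) * (Nat.factorial n : ℝ)
      = ((n + m).factorial : ℝ) := by
    have := Nat.choose_mul_factorial_mul_factorial (Nat.le_add_left m n)
    rw [Nat.add_sub_cancel] at this
    exact_mod_cast this
  have hn0 : (Nat.factorial n : ℝ) ≠ 0 := Nat.cast_ne_zero.2 (Nat.factorial_ne_zero _)
  have hm0 : (Nat.factorial m : ℝ) ≠ 0 := Nat.cast_ne_zero.2 (Nat.factorial_ne_zero _)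
  have hch : ((n + m).choose m : ℝ) ≠ 0 :=
    Nat.cast_ne_zero.2 (Nat.choose_pos (Nat.le_add_left m n)).ne'
  field_simp
  linear_combination (((n + 1).choose (m + 1) : ℝ)
      * (stirlingS1 (n + m) m : ℝ)) * hc
end
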